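/- arXiv:1712.06242 — 5 statements merged into one kernel-verified Lean document; each statement's English description precedes it below -/
import Mathlib

section
/- There exists a constant C > 0, independent of the triangle, such that for every nondegenerate triangle K in ℝ² and every C¹ function v : ℝ² → ℝ with ∫_K v dx = 0, one has ∫_K v² dx ≤ C² h_K² ∫_K |∇v|² dx (equivalently, ‖v‖_{L²(K)} ≤ C h_K |v|_{H¹(K)}). In particular, for every C¹ function f, the deviation from its mean value over K satisfies ‖f − (1/|K|)∫_K f dx‖_{L²(K)} ≤ C h_K |f|_{H¹(K)}. -/
open MeasureTheory

noncomputable section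

abbrev E2 : Type := EuclideanSpace ℝ (Fin 2)

/-- The point (a, b) in the Euclidean plane. -/
def pt (a b : ℝ) : E2 := WithLp.toLp 2 ![a, b]

/-- First standard basis vector. -/
def vex : E2 := pt 1 0
/-- Second standard basis vector. -/
def vey : E2 := pt 0 1

/-- Euclidean dot product on the plane. -/
def dot2 (v w : E2) : ℝ := v 0 * w 0 + v 1 * w 1

/-- rot (w₁, w₂) = (w₂, −w₁). -/
def rot (w : E2) : E2 := pt (w 1) (-(w 0))

/-- Flux of a vector field across the (oriented) segment from `a` to `b`:
∫₀¹ q(a + t(b − a)) · rot(b − a) dt, the line integral of the normal component. -/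
def flux (q : E2 → E2) (a b : E2) : ℝ :=
  ∫ t in (0:ℝ)..1, dot2 (q (a + t • (b - a))) (rot (b - a))

/-- Squared Euclidean norm of the gradient of a scalar function. -/
def gradSq (v : E2 → ℝ) (x : E2) : ℝ :=
  (fderiv ℝ v x vex) ^ 2 + (fderiv ℝ v x vey) ^ 2

/-- Gradient vector of a scalar function. -/
def gradVec (v : E2 → ℝ) (x : E2) : E2 :=
  pt (fderiv ℝ v x vex) (fderiv ℝ v x vey)

/-- Squared Frobenius norm of the Jacobian of a vector field
(sum of squares of the four first-order partial derivatives). -/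
def frobSq (q : E2 → E2) (x : E2) : ℝ :=
  (fderiv ℝ q x vex 0) ^ 2 + (fderiv ℝ q x vey 0) ^ 2 +
  (fderiv ℝ q x vex 1) ^ 2 + (fderiv ℝ q x vey 1) ^ 2

/-- Divergence of a planar vector field. -/
def divg (q : E2 → E2) (x : E2) : ℝ := fderiv ℝ q x vex 0 + fderiv ℝ q x vey 1

/-- The reference triangle with vertices (0,0), (1,0), (0,1). -/
def Khat : Set E2 := convexHull ℝ {pt 0 0, pt 1 0, pt 0 1}

/-- The triangle with vertices (0,0), (α,0), (0,β). -/
def Kab (a b : ℝ) : Set E2 := convexHull ℝ {pt 0 0, pt a 0, pt 0 b}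

/-- Matrix–vector multiplication for 2×2 matrices acting on the plane. -/
def matVec (A : Matrix (Fin 2) (Fin 2) ℝ) (x : E2) : E2 :=
  pt (A 0 0 * x 0 + A 0 1 * x 1) (A 1 0 * x 0 + A 1 1 * x 1)

/-- Squared Frobenius norm of a 2×2 matrix. -/
def mFrobSq (M : Matrix (Fin 2) (Fin 2) ℝ) : ℝ :=
  M 0 0 ^ 2 + M 0 1 ^ 2 + M 1 0 ^ 2 + M 1 1 ^ 2

/-!
For `v` with mean zero on a convex set `K`, `2 |K| ∫_K v² = ∫_K ∫_K (v x - v y)²`. Along the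
segment from `y` to `x`, the fundamental theorem of calculus and Cauchy–Schwarz give
`(v x - v y)² ≤ h_K² ∫₀¹ |∇v (y + t (x - y))|² dt`. For fixed `t`, the point `y + t (x - y)` is
the image of `x` under a homothety of ratio `t` centred at `y`, and the image of `y` under one of
ratio `1 - t` centred at `x`; both map `K` into itself and one ratio is at least `1/2`, so
integrating over that variable costs at most a factor `2ⁿ` in dimension `n`. Hence
`∫_K v² ≤ 2ⁿ⁻¹ h_K² ∫_K |∇v|²`, i.e. `C = √2` in the plane.
-/

section Poincare

open Set AffineMap Module
open scoped ENNReal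

theorem sq_setIntegral_Ioc_zero_one_le {f : ℝ → ℝ} (hf : Continuous f) :
    (∫ t in Ioc (0 : ℝ) 1, f t) ^ 2 ≤ ∫ t in Ioc (0 : ℝ) 1, f t ^ 2 := by
  have hjensen := (Even.convexOn_pow (𝕜 := ℝ) even_two).map_set_average_le (μ := volume)
    (t := Ioc 0 1) (continuous_pow 2).continuousOn isClosed_univ (by simp) (by simp) (by simp)
    hf.integrableOn_Ioc ((continuous_pow 2).comp hf).integrableOn_Ioc
  simpa [setAverage_eq] using hjensen

theorem integral_integral_sub_sq {α : Type*} [MeasurableSpace α] {ν : Measure α}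
    [IsFiniteMeasure ν] {f : α → ℝ} (hf : Integrable f ν) (hf2 : Integrable (fun x ↦ f x ^ 2) ν) :
    ∫ x, ∫ y, (f x - f y) ^ 2 ∂ν ∂ν =
      2 * ν.real univ * ∫ x, f x ^ 2 ∂ν - 2 * (∫ x, f x ∂ν) ^ 2 := by
  have hexpand : ∀ x y, (f x - f y) ^ 2 = (f x ^ 2 - 2 * f x * f y) + f y ^ 2 := fun x y ↦ by ring
  have hinner : ∀ x, ∫ y, (f x - f y) ^ 2 ∂ν =
      (ν.real univ * f x ^ 2 - 2 * (∫ y, f y ∂ν) * f x) + ∫ y, f y ^ 2 ∂ν := by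
    intro x
    simp_rw [hexpand x]
    rw [integral_add (f := fun y ↦ f x ^ 2 - 2 * f x * f y)
        ((integrable_const _).sub (hf.const_mul _)) hf2,
      integral_sub (integrable_const _) (hf.const_mul _), integral_const, integral_const_mul]
    simp only [smul_eq_mul]
    ring
  simp_rw [hinner]
  rw [integral_add (f := fun x ↦ ν.real univ * f x ^ 2 - (2 * ∫ y, f y ∂ν) * f x)
      ((hf2.const_mul _).sub (hf.const_mul _)) (integrable_const _),
    integral_sub (hf2.const_mul _) (hf.const_mul _), integral_const, integral_const_mul,
    integral_const_mul]
  simp only [smul_eq_mul]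
  ring

variable {E : Type*} [NormedAddCommGroup E] [NormedSpace ℝ E]

theorem sq_sub_le_setIntegral_norm_fderiv_sq {v : E → ℝ} (hv : ContDiff ℝ 1 v) (x y : E) :
    (v x - v y) ^ 2 ≤ ‖x - y‖ ^ 2 * ∫ t in Ioc (0 : ℝ) 1, ‖fderiv ℝ v (lineMap y x t)‖ ^ 2 := by
  have hDv : Continuous fun t : ℝ ↦ fderiv ℝ v (lineMap y x t) :=
    (hv.continuous_fderiv one_ne_zero).comp (by fun_prop)
  set D : ℝ → ℝ := fun t ↦ fderiv ℝ v (lineMap y x t) (x - y)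
  have hD : Continuous D := hDv.clm_apply continuous_const
  have hftc : v x - v y = ∫ t in Ioc (0 : ℝ) 1, D t := by
    have hderiv : ∀ t ∈ uIcc (0 : ℝ) 1, HasDerivAt (fun t ↦ v (lineMap y x t)) (D t) t :=
      fun t _ ↦ ((hv.differentiable one_ne_zero _).hasFDerivAt).comp_hasDerivAt t
        hasDerivAt_lineMap
    rw [← intervalIntegral.integral_of_le zero_le_one,
      intervalIntegral.integral_eq_sub_of_hasDerivAt hderiv (hD.intervalIntegrable _ _)]
    simp
  have hDle : ∀ t, D t ^ 2 ≤ ‖x - y‖ ^ 2 * ‖fderiv ℝ v (lineMap y x t)‖ ^ 2 := fun t ↦ by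
    rw [← mul_pow, ← sq_abs, mul_comm]
    exact pow_le_pow_left₀ (abs_nonneg _) ((fderiv ℝ v _).le_opNorm _) 2
  calc (v x - v y) ^ 2 ≤ ∫ t in Ioc (0 : ℝ) 1, D t ^ 2 := hftc ▸ sq_setIntegral_Ioc_zero_one_le hD
    _ ≤ ∫ t in Ioc (0 : ℝ) 1, ‖x - y‖ ^ 2 * ‖fderiv ℝ v (lineMap y x t)‖ ^ 2 :=
        setIntegral_mono ((hD.pow 2).integrableOn_Ioc)
          ((continuous_const.mul (hDv.norm.pow 2)).integrableOn_Ioc) hDle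
    _ = ‖x - y‖ ^ 2 * ∫ t in Ioc (0 : ℝ) 1, ‖fderiv ℝ v (lineMap y x t)‖ ^ 2 :=
        integral_const_mul _ _

variable [FiniteDimensional ℝ E] [MeasurableSpace E] [BorelSpace E]

theorem ofReal_setIntegral_setIntegral {μ : Measure E} [IsLocallyFiniteMeasure μ]
    {F : E → E → ℝ} (hF : Continuous (Function.uncurry F)) (hF0 : ∀ x y, 0 ≤ F x y) {K : Set E}
    (hK : IsCompact K) :
    ENNReal.ofReal (∫ x in K, ∫ y in K, F x y ∂μ ∂μ) =
      ∫⁻ x in K, ∫⁻ y in K, ENNReal.ofReal (F x y) ∂μ ∂μ := by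
  have hinner : ∀ x, Continuous (F x) := fun x ↦ hF.comp (Continuous.prodMk_right x)
  rw [ofReal_integral_eq_lintegral_ofReal
    ((continuous_parametric_integral_of_continuous hF hK).continuousOn.integrableOn_compact hK)
    (ae_of_all _ fun x ↦ setIntegral_nonneg hK.measurableSet fun y _ ↦ hF0 x y)]
  exact lintegral_congr fun x ↦ ofReal_integral_eq_lintegral_ofReal
    ((hinner x).continuousOn.integrableOn_compact hK) (ae_of_all _ (hF0 x))

variable (μ : Measure E) [μ.IsAddHaarMeasure]

theorem map_lineMap_addHaar (y : E) {t : ℝ} (ht : t ≠ 0) :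
    Measure.map (fun x ↦ lineMap y x t) μ = ENNReal.ofReal |(t ^ finrank ℝ E)⁻¹| • μ := by
  have hsplit : (fun x ↦ lineMap y x t) = ((1 - t) • y + ·) ∘ (t • ·) := by
    ext x; simp [lineMap_apply_module]
  rw [hsplit, ← Measure.map_map (by fun_prop) (by fun_prop), Measure.map_addHaar_smul μ ht,
    Measure.map_smul, map_add_left_eq_self]

variable {μ} {K : Set E} {G : E → ℝ≥0∞}

theorem setLIntegral_comp_lineMap_le (hK : Convex ℝ K) (hKm : MeasurableSet K)
    (hG : Measurable G) {y : E} (hy : y ∈ K) {t : ℝ} (ht : t ∈ Ioc 0 1) :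
    ∫⁻ x in K, G (lineMap y x t) ∂μ ≤ ENNReal.ofReal (t ^ finrank ℝ E)⁻¹ * ∫⁻ z in K, G z ∂μ := by
  calc ∫⁻ x in K, G (lineMap y x t) ∂μ
      = ∫⁻ x in K, K.indicator G (lineMap y x t) ∂μ :=
        setLIntegral_congr_fun hKm fun x hx ↦
          (indicator_of_mem (hK.lineMap_mem hy hx (Ioc_subset_Icc_self ht)) G).symm
    _ ≤ ∫⁻ x, K.indicator G (lineMap y x t) ∂μ := setLIntegral_le_lintegral _ _
    _ = ENNReal.ofReal (t ^ finrank ℝ E)⁻¹ * ∫⁻ z in K, G z ∂μ := by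
        rw [← lintegral_map (hG.indicator hKm) (by fun_prop), map_lineMap_addHaar μ y ht.1.ne',
          lintegral_smul_measure, lintegral_indicator hKm, smul_eq_mul,
          abs_of_pos (by have := ht.1; positivity)]

theorem setLIntegral_setLIntegral_comp_lineMap_le (hK : Convex ℝ K) (hKm : MeasurableSet K)
    (hG : Measurable G) {t : ℝ} (ht : t ∈ Icc 0 1) :
    ∫⁻ x in K, ∫⁻ y in K, G (lineMap y x t) ∂μ ∂μ ≤
      2 ^ finrank ℝ E * μ K * ∫⁻ z in K, G z ∂μ := by
  have hscale : ∀ s ∈ Icc (1 / 2 : ℝ) 1, ∀ y ∈ K,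
      ∫⁻ x in K, G (lineMap y x s) ∂μ ≤ 2 ^ finrank ℝ E * ∫⁻ z in K, G z ∂μ := by
    intro s hs y hy
    refine (setLIntegral_comp_lineMap_le hK hKm hG hy ⟨by linarith [hs.1], hs.2⟩).trans ?_
    gcongr
    rw [← inv_pow, ← ENNReal.ofReal_ofNat 2, ← ENNReal.ofReal_pow zero_le_two]
    gcongr
    · exact inv_nonneg.2 (by linarith [hs.1])
    · rw [inv_le_comm₀ (by linarith [hs.1]) two_pos]
      simpa using hs.1
  have hconst : ∫⁻ _ in K, 2 ^ finrank ℝ E * ∫⁻ z in K, G z ∂μ ∂μ =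
      2 ^ finrank ℝ E * μ K * ∫⁻ z in K, G z ∂μ := by
    rw [setLIntegral_const]; ring
  rw [← hconst]
  rcases le_total (1 / 2) t with h | h
  · have hmeas : Measurable fun p : E × E ↦ G (lineMap p.2 p.1 t) := hG.comp (by fun_prop)
    rw [lintegral_lintegral_swap hmeas.aemeasurable]
    exact setLIntegral_mono' hKm fun y hy ↦ hscale t ⟨h, ht.2⟩ y hy
  · simp_rw [← lineMap_apply_one_sub _ _ t]
    exact setLIntegral_mono' hKm fun x hx ↦
      hscale (1 - t) ⟨by linarith, by linarith [ht.1]⟩ x hx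

theorem setLIntegral_setLIntegral_lintegral_comp_lineMap_le (hK : Convex ℝ K)
    (hKm : MeasurableSet K) (hG : Measurable G) :
    ∫⁻ x in K, ∫⁻ y in K, (∫⁻ t in Ioc (0 : ℝ) 1, G (lineMap y x t)) ∂μ ∂μ ≤
      2 ^ finrank ℝ E * μ K * ∫⁻ z in K, G z ∂μ := by
  have hmeas : Measurable fun p : (E × ℝ) × E ↦ G (lineMap p.2 p.1.1 p.1.2) :=
    hG.comp (by fun_prop)
  calc ∫⁻ x in K, ∫⁻ y in K, (∫⁻ t in Ioc (0 : ℝ) 1, G (lineMap y x t)) ∂μ ∂μ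
      = ∫⁻ x in K, (∫⁻ t in Ioc (0 : ℝ) 1, ∫⁻ y in K, G (lineMap y x t) ∂μ) ∂μ :=
        lintegral_congr fun x ↦ lintegral_lintegral_swap (hG.comp (by fun_prop)).aemeasurable
    _ = ∫⁻ t in Ioc (0 : ℝ) 1, ∫⁻ x in K, ∫⁻ y in K, G (lineMap y x t) ∂μ ∂μ :=
        lintegral_lintegral_swap hmeas.lintegral_prod_right'.aemeasurable
    _ ≤ ∫⁻ _ in Ioc (0 : ℝ) 1, 2 ^ finrank ℝ E * μ K * ∫⁻ z in K, G z ∂μ :=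
        setLIntegral_mono' measurableSet_Ioc fun t ht ↦
          setLIntegral_setLIntegral_comp_lineMap_le hK hKm hG (Ioc_subset_Icc_self ht)
    _ = 2 ^ finrank ℝ E * μ K * ∫⁻ z in K, G z ∂μ := by simp

theorem setLIntegral_setLIntegral_ofReal_sq_sub_le (hK : Convex ℝ K) (hKc : IsCompact K)
    {v : E → ℝ} (hv : ContDiff ℝ 1 v) :
    ∫⁻ x in K, ∫⁻ y in K, ENNReal.ofReal ((v x - v y) ^ 2) ∂μ ∂μ ≤
      ENNReal.ofReal (Metric.diam K ^ 2) *
        (2 ^ finrank ℝ E * μ K * ∫⁻ x in K, ENNReal.ofReal (‖fderiv ℝ v x‖ ^ 2) ∂μ) := by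
  set h := Metric.diam K
  set g : E → ℝ := fun x ↦ ‖fderiv ℝ v x‖ ^ 2
  have hg : Continuous g := (hv.continuous_fderiv one_ne_zero).norm.pow 2
  calc ∫⁻ x in K, ∫⁻ y in K, ENNReal.ofReal ((v x - v y) ^ 2) ∂μ ∂μ
      ≤ ∫⁻ x in K, ∫⁻ y in K,
          (ENNReal.ofReal (h ^ 2) * ∫⁻ t in Ioc (0 : ℝ) 1, ENNReal.ofReal (g (lineMap y x t)))
          ∂μ ∂μ := by
        refine setLIntegral_mono' hKc.measurableSet fun x hx ↦
          setLIntegral_mono' hKc.measurableSet fun y hy ↦ ?_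
        have hxy : ‖x - y‖ ≤ h := dist_eq_norm x y ▸ Metric.dist_le_diam_of_mem hKc.isBounded hx hy
        have hgint : IntegrableOn (fun t ↦ g (lineMap y x t)) (Ioc (0 : ℝ) 1) :=
          (hg.comp (by fun_prop)).integrableOn_Ioc
        rw [← ofReal_integral_eq_lintegral_ofReal hgint (ae_of_all _ fun _ ↦ sq_nonneg _),
          ← ENNReal.ofReal_mul (sq_nonneg h)]
        refine ENNReal.ofReal_le_ofReal ((sq_sub_le_setIntegral_norm_fderiv_sq hv x y).trans ?_)
        gcongr
    _ = ENNReal.ofReal (h ^ 2) * ∫⁻ x in K, ∫⁻ y in K,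
          (∫⁻ t in Ioc (0 : ℝ) 1, ENNReal.ofReal (g (lineMap y x t))) ∂μ ∂μ := by
        simp_rw [lintegral_const_mul' _ _ ENNReal.ofReal_ne_top]
    _ ≤ ENNReal.ofReal (h ^ 2) * (2 ^ finrank ℝ E * μ K * ∫⁻ x in K, ENNReal.ofReal (g x) ∂μ) := by
        gcongr
        exact setLIntegral_setLIntegral_lintegral_comp_lineMap_le hK hKc.measurableSet
          (by fun_prop)

theorem setIntegral_sq_le_of_setIntegral_eq_zero (hK : Convex ℝ K) (hKc : IsCompact K)
    {v : E → ℝ} (hv : ContDiff ℝ 1 v) (hmean : ∫ x in K, v x ∂μ = 0) :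
    ∫ x in K, v x ^ 2 ∂μ ≤
      2 ^ finrank ℝ E / 2 * Metric.diam K ^ 2 * ∫ x in K, ‖fderiv ℝ v x‖ ^ 2 ∂μ := by
  have hKfin : μ K ≠ ∞ := hKc.measure_lt_top.ne
  have : IsFiniteMeasure (μ.restrict K) := isFiniteMeasure_restrict.2 hKfin
  set h := Metric.diam K
  set Q := ∫ x in K, v x ^ 2 ∂μ
  set I := ∫ x in K, ‖fderiv ℝ v x‖ ^ 2 ∂μ
  have hI : ENNReal.ofReal I = ∫⁻ x in K, ENNReal.ofReal (‖fderiv ℝ v x‖ ^ 2) ∂μ :=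
    ofReal_integral_eq_lintegral_ofReal
      (((hv.continuous_fderiv one_ne_zero).norm.pow 2).continuousOn.integrableOn_compact hKc)
      (ae_of_all _ fun _ ↦ sq_nonneg _)
  have hvar : ∫ x in K, ∫ y in K, (v x - v y) ^ 2 ∂μ ∂μ = 2 * μ.real K * Q := by
    rw [integral_integral_sub_sq (hv.continuous.continuousOn.integrableOn_compact hKc)
      ((hv.continuous.pow 2).continuousOn.integrableOn_compact hKc), hmean]
    simp [Q]
  have hbound := setLIntegral_setLIntegral_ofReal_sq_sub_le (μ := μ) hK hKc hv
  rw [← ofReal_setIntegral_setIntegral (by fun_prop) (fun _ _ ↦ sq_nonneg _) hKc, hvar, ← hI,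
    ← ofReal_measureReal hKfin, ← ENNReal.ofReal_ofNat 2, ← ENNReal.ofReal_pow zero_le_two,
    ← ENNReal.ofReal_mul (by positivity), ← ENNReal.ofReal_mul (by positivity),
    ← ENNReal.ofReal_mul (by positivity),
    ENNReal.ofReal_le_ofReal_iff (by positivity)] at hbound
  rcases measureReal_nonneg.eq_or_lt with hV | hV
  · have hK0 : μ K = 0 := (measureReal_eq_zero_iff hKfin).1 hV.symm
    simp [Q, I, Measure.restrict_eq_zero.2 hK0]
  calc Q = 2 * μ.real K * Q / (2 * μ.real K) := by field_simp
    _ ≤ h ^ 2 * (2 ^ finrank ℝ E * μ.real K * I) / (2 * μ.real K) := by gcongr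
    _ = 2 ^ finrank ℝ E / 2 * h ^ 2 * I := by field_simp

theorem setIntegral_sub_setAverage_sq_le (hK : Convex ℝ K) (hKc : IsCompact K)
    {v : E → ℝ} (hv : ContDiff ℝ 1 v) :
    ∫ x in K, (v x - ⨍ y in K, v y ∂μ) ^ 2 ∂μ ≤
      2 ^ finrank ℝ E / 2 * Metric.diam K ^ 2 * ∫ x in K, ‖fderiv ℝ v x‖ ^ 2 ∂μ := by
  simpa [fderiv_sub_const] using setIntegral_sq_le_of_setIntegral_eq_zero hK hKc
    (hv.sub contDiff_const) (setAverage_sub_setAverage hKc.measure_lt_top.ne v)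

end Poincare

theorem norm_fderiv_sq_le_gradSq (v : E2 → ℝ) (x : E2) : ‖fderiv ℝ v x‖ ^ 2 ≤ gradSq v x := by
  set L := fderiv ℝ v x
  have hg0 : 0 ≤ gradSq v x := by unfold gradSq; positivity
  have hL : ∀ w : E2, |L w| ≤ √(gradSq v x) * ‖w‖ := by
    intro w
    have hw : L w = w 0 * L vex + w 1 * L vey := by
      have hdecomp : w = w 0 • vex + w 1 • vey := by
        ext i; fin_cases i <;> simp [vex, vey, pt]
      conv_lhs => rw [hdecomp]
      simp
    have hnorm : ‖w‖ ^ 2 = w 0 ^ 2 + w 1 ^ 2 := by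
      simp [EuclideanSpace.norm_sq_eq, Fin.sum_univ_two]
    rw [← Real.sqrt_sq (norm_nonneg w), ← Real.sqrt_mul hg0]
    refine Real.abs_le_sqrt ?_
    rw [hw, hnorm]
    unfold gradSq
    nlinarith [sq_nonneg (w 0 * L vey - w 1 * L vex)]
  calc ‖L‖ ^ 2 ≤ √(gradSq v x) ^ 2 :=
        pow_le_pow_left₀ (norm_nonneg _) (L.opNorm_le_bound (Real.sqrt_nonneg _) hL) 2
    _ = gradSq v x := Real.sq_sqrt hg0

theorem setIntegral_norm_fderiv_sq_le_setIntegral_gradSq {v : E2 → ℝ} (hv : ContDiff ℝ 1 v)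
    {K : Set E2} (hKc : IsCompact K) :
    ∫ x in K, ‖fderiv ℝ v x‖ ^ 2 ≤ ∫ x in K, gradSq v x := by
  have hDv := hv.continuous_fderiv one_ne_zero
  have hgrad : Continuous (gradSq v) := by unfold gradSq; fun_prop
  exact setIntegral_mono ((hDv.norm.pow 2).continuousOn.integrableOn_compact hKc)
    (hgrad.continuousOn.integrableOn_compact hKc) (norm_fderiv_sq_le_gradSq v)

/-- Poincaré–Wirtinger inequality on triangles with a constant independent of
the geometry: `‖v‖_{L²(K)} ≤ C h_K |v|_{H¹(K)}` for mean-zero `v`, and the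
deviation of any C¹ function from its mean value over `K` obeys the same bound. -/
theorem stmt0 :
    ∃ C > (0:ℝ), ∀ x₁ x₂ x₃ : E2, AffineIndependent ℝ ![x₁, x₂, x₃] →
      ∀ K : Set E2, K = convexHull ℝ {x₁, x₂, x₃} →
      ((∀ v : E2 → ℝ, ContDiff ℝ 1 v → (∫ x in K, v x) = 0 →
          (∫ x in K, (v x) ^ 2) ≤
            C ^ 2 * Metric.diam K ^ 2 * ∫ x in K, gradSq v x) ∧
       (∀ f : E2 → ℝ, ContDiff ℝ 1 f →
          (∫ x in K, (f x - (∫ y in K, f y) / (volume K).toReal) ^ 2) ≤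
            C ^ 2 * Metric.diam K ^ 2 * ∫ x in K, gradSq f x)) := by
  refine ⟨√2, by positivity, fun x₁ x₂ x₃ _ K hKdef ↦ ?_⟩
  have hK : Convex ℝ K := hKdef ▸ convex_convexHull ℝ _
  have hKc : IsCompact K := by rw [hKdef]; exact (Set.toFinite _).isCompact_convexHull (𝕜 := ℝ)
  have hconst : ∀ v : E2 → ℝ, ContDiff ℝ 1 v →
      2 ^ Module.finrank ℝ E2 / 2 * Metric.diam K ^ 2 * ∫ x in K, ‖fderiv ℝ v x‖ ^ 2 ≤
        √2 ^ 2 * Metric.diam K ^ 2 * ∫ x in K, gradSq v x := by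
    intro v hv
    rw [finrank_euclideanSpace_fin, Real.sq_sqrt zero_le_two]
    norm_num
    gcongr 2 * Metric.diam K ^ 2 * ?_
    exact setIntegral_norm_fderiv_sq_le_setIntegral_gradSq hv hKc
  refine ⟨fun v hv hmean ↦
    (setIntegral_sq_le_of_setIntegral_eq_zero hK hKc hv hmean).trans (hconst v hv), fun f hf ↦ ?_⟩
  rw [← measureReal_def, div_eq_inv_mul, ← smul_eq_mul, ← setAverage_eq]
  exact (setIntegral_sub_setAverage_sq_le hK hKc hf).trans (hconst f hf)

end
end

section
/- Let K be a nondegenerate triangle in ℝ² with vertices x₁, x₂, x₃ and let c₁, c₂, c₃ ∈ ℝ. Then there exists a unique pair (a, b) ∈ ℝ × ℝ² such that the Raviart–Thomas field p(x) = a x + b has flux c_i across the edge e_i of K for i = 1, 2, 3 (each edge being given a fixed orientation). -/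
open MeasureTheory

noncomputable section

/-! The integrand of the flux of `x ↦ a • x + b` across the segment from `u` to `v` is constant,
so the flux is `a (u × v) + b · rot (v - u)`, linear in `(a, b)`. Over the three edges of the
triangle the `b`-terms cancel and the `a`-terms add up to `a` times `det (x₂ - x₁, x₃ - x₁)`,
which is nonzero for a nondegenerate triangle; so vanishing fluxes force `a = 0`, and then
`b = 0` by Cramer's rule on two edges. The flux map `ℝ × ℝ² → ℝ³` is therefore an injective
linear map between spaces of dimension 3, hence bijective. -/

lemma flux_smul_add (a : ℝ) (b u v : E2) :
    flux (fun x => a • x + b) u v =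
      a * (u 0 * v 1 - u 1 * v 0) + (b 0 * (v 1 - u 1) - b 1 * (v 0 - u 0)) := by
  have hconst : ∀ t : ℝ, dot2 (a • (u + t • (v - u)) + b) (rot (v - u)) =
      a * (u 0 * v 1 - u 1 * v 0) + (b 0 * (v 1 - u 1) - b 1 * (v 0 - u 0)) := fun t => by
    simp only [dot2, rot, pt, PiLp.add_apply, PiLp.smul_apply, PiLp.sub_apply, smul_eq_mul,
      PiLp.toLp_apply, Matrix.cons_val_zero, Matrix.cons_val_one]
    ring
  simp only [flux, hconst, intervalIntegral.integral_const, sub_zero, one_smul]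

lemma AffineIndependent.det_ne_zero {x₁ x₂ x₃ : E2} (hK : AffineIndependent ℝ ![x₁, x₂, x₃]) :
    (x₂ 0 - x₁ 0) * (x₃ 1 - x₁ 1) - (x₂ 1 - x₁ 1) * (x₃ 0 - x₁ 0) ≠ 0 := by
  intro hD
  -- a kernel vector `v` of the edge matrix gives the affine relation with weights `-(v₀ + v₁), v₀, v₁`
  obtain ⟨v, hv, hker⟩ := (Matrix.exists_mulVec_eq_zero_iff
    (M := !![x₂ 0 - x₁ 0, x₃ 0 - x₁ 0; x₂ 1 - x₁ 1, x₃ 1 - x₁ 1])).2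
      (by rw [Matrix.det_fin_two_of]; linear_combination hD)
  have hw := hK.eq_zero_of_sum_eq_zero (s := Finset.univ) (w := ![-(v 0 + v 1), v 0, v 1])
    (by simp [Fin.sum_univ_three]) (by
      have h₀ := congrFun hker 0
      have h₁ := congrFun hker 1
      simp only [Matrix.mulVec, dotProduct, Fin.sum_univ_two, Matrix.of_apply, Matrix.cons_val',
        Matrix.cons_val_fin_one, Matrix.cons_val_zero, Matrix.cons_val_one, Pi.zero_apply] at h₀ h₁
      simp only [Fin.sum_univ_three, Matrix.cons_val_zero, Matrix.cons_val_one, Matrix.cons_val_two,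
        Matrix.tail_cons, Matrix.head_cons]
      ext i
      fin_cases i
      · simp only [Fin.zero_eta, PiLp.add_apply, PiLp.smul_apply, PiLp.zero_apply, smul_eq_mul]
        linear_combination h₀
      · simp only [Fin.mk_one, PiLp.add_apply, PiLp.smul_apply, PiLp.zero_apply, smul_eq_mul]
        linear_combination h₁)
  refine hv (funext fun i => ?_)
  fin_cases i
  · simpa using hw 1 (Finset.mem_univ _)
  · simpa using hw 2 (Finset.mem_univ _)

lemma eq_zero_of_edge_fluxes_eq_zero {x₁ x₂ x₃ : E2} (hK : AffineIndependent ℝ ![x₁, x₂, x₃])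
    {a : ℝ} {b : E2} (h₁ : flux (fun x => a • x + b) x₂ x₃ = 0)
    (h₂ : flux (fun x => a • x + b) x₃ x₁ = 0) (h₃ : flux (fun x => a • x + b) x₁ x₂ = 0) :
    a = 0 ∧ b = 0 := by
  rw [flux_smul_add] at h₁ h₂ h₃
  have hD := hK.det_ne_zero
  have ha : a = 0 := by
    refine (mul_eq_zero.1 ?_).resolve_right hD
    linear_combination h₁ + h₂ + h₃
  subst ha
  have hb₀ : b 0 = 0 := by
    refine (mul_eq_zero.1 ?_).resolve_right hD
    linear_combination (x₂ 0 - x₁ 0) * h₁ - (x₃ 0 - x₂ 0) * h₃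
  have hb₁ : b 1 = 0 := by
    refine (mul_eq_zero.1 ?_).resolve_right hD
    linear_combination (x₂ 1 - x₁ 1) * h₁ - (x₃ 1 - x₂ 1) * h₃
  refine ⟨rfl, ?_⟩
  ext i
  fin_cases i
  exacts [hb₀, hb₁]

def edgeFlux (u v : E2) : ℝ × E2 →ₗ[ℝ] ℝ where
  toFun ab := flux (fun x => ab.1 • x + ab.2) u v
  map_add' ab ab' := by
    simp only [flux_smul_add, Prod.fst_add, Prod.snd_add, PiLp.add_apply]
    ring
  map_smul' r ab := by
    simp only [flux_smul_add, Prod.smul_fst, Prod.smul_snd, PiLp.smul_apply, smul_eq_mul,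
      RingHom.id_apply]
    ring

def edgeFluxes (x₁ x₂ x₃ : E2) : ℝ × E2 →ₗ[ℝ] Fin 3 → ℝ :=
  LinearMap.pi ![edgeFlux x₂ x₃, edgeFlux x₃ x₁, edgeFlux x₁ x₂]

lemma edgeFluxes_bijective {x₁ x₂ x₃ : E2} (hK : AffineIndependent ℝ ![x₁, x₂, x₃]) :
    Function.Bijective (edgeFluxes x₁ x₂ x₃) := by
  have hinj : Function.Injective (edgeFluxes x₁ x₂ x₃) := by
    refine (injective_iff_map_eq_zero _).2 fun ⟨a, b⟩ h => ?_
    obtain ⟨rfl, rfl⟩ :=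
      eq_zero_of_edge_fluxes_eq_zero hK (congrFun h 0) (congrFun h 1) (congrFun h 2)
    rfl
  refine ⟨hinj, (LinearMap.injective_iff_surjective_of_finrank_eq_finrank ?_).1 hinj⟩
  simp

/-- Unisolvence of the lowest-order Raviart–Thomas element: for any prescribed
fluxes `c₁, c₂, c₃` across the (oriented) edges of a nondegenerate triangle there
is a unique field `p(x) = a x + b` realizing them. -/
theorem stmt4 (x₁ x₂ x₃ : E2) (hK : AffineIndependent ℝ ![x₁, x₂, x₃])
    (c₁ c₂ c₃ : ℝ) :
    ∃! ab : ℝ × E2,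
      flux (fun x => ab.1 • x + ab.2) x₂ x₃ = c₁ ∧
      flux (fun x => ab.1 • x + ab.2) x₃ x₁ = c₂ ∧
      flux (fun x => ab.1 • x + ab.2) x₁ x₂ = c₃ := by
  convert (edgeFluxes_bijective hK).existsUnique ![c₁, c₂, c₃] using 2 with ab
  simp [edgeFluxes, edgeFlux, funext_iff, Fin.forall_fin_succ]

end
end

section
/- Let K be a nondegenerate triangle in ℝ² with area |K|, let q : ℝ² → ℝ² be a C¹ vector field, and let p(x) = a x + b be a Raviart–Thomas field in RT₀ whose flux across each edge of K equals that of q (with the same orientation). Then the constant divergence of p is the mean value of the divergence of q over K: 2a = (1/|K|) ∫_K div q dx, where div q = ∂q₁/∂x + ∂q₂/∂y. -/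
/-!
The divergence theorem on a triangle: `∫_K div q` equals the sum of the three edge fluxes of `q`,
up to the sign of the orientation of `(x₁, x₂, x₃)`. On the reference triangle `Khat` this is
Fubini plus the fundamental theorem of calculus along the coordinate axes. It is transported to
`K` by the affine map `z ↦ x₁ + M z`, `M = [x₂ - x₁ | x₃ - x₁]`, through the Piola transform
`z ↦ adj(M) q(x₁ + M z)`, which preserves fluxes and multiplies divergences by `det M`.
Applied to `q` and to `p`, whose fluxes agree, it gives `∫_K div q = ∫_K div p = 2a |K|`, and
`|K| ≠ 0` because affinely independent vertices span the plane.
-/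

open MeasureTheory

noncomputable section

open Set

@[simp] lemma pt_apply_zero (a b : ℝ) : pt a b 0 = a := rfl
@[simp] lemma pt_apply_one (a b : ℝ) : pt a b 1 = b := rfl

def planeEquiv : (ℝ × ℝ) ≃L[ℝ] E2 :=
  (ContinuousLinearEquiv.finTwoArrow ℝ ℝ).symm.trans (EuclideanSpace.equiv (Fin 2) ℝ).symm

lemma planeEquiv_apply (z : ℝ × ℝ) : planeEquiv z = pt z.1 z.2 := rfl

lemma measurePreserving_planeEquiv : MeasurePreserving planeEquiv volume volume :=
  ((volume_preserving_finTwoArrow ℝ).comp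
    (EuclideanSpace.volume_preserving_symm_measurableEquiv_toLp (Fin 2))).symm
    ((MeasurableEquiv.toLp 2 (Fin 2 → ℝ)).symm.trans MeasurableEquiv.finTwoArrow)

lemma pt_add_smul_sub (a b c d t : ℝ) :
    pt a b + t • (pt c d - pt a b) = pt (a + t * (c - a)) (b + t * (d - b)) := by
  ext i; fin_cases i <;> simp [pt]

lemma hasDerivAt_pt_left (x y : ℝ) : HasDerivAt (fun s => pt s y) vex x :=
  planeEquiv.hasFDerivAt.comp_hasDerivAt x ((hasDerivAt_id x).prodMk (hasDerivAt_const x y))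

lemma hasDerivAt_pt_right (x y : ℝ) : HasDerivAt (fun s => pt x s) vey y :=
  planeEquiv.hasFDerivAt.comp_hasDerivAt y ((hasDerivAt_const y x).prodMk (hasDerivAt_id y))

def unitTriangle : Set (ℝ × ℝ) := {z | 0 ≤ z.1 ∧ 0 ≤ z.2 ∧ z.1 + z.2 ≤ 1}

lemma isClosed_unitTriangle : IsClosed unitTriangle :=
  (isClosed_le continuous_const continuous_fst).inter
    ((isClosed_le continuous_const continuous_snd).inter
      (isClosed_le (continuous_fst.add continuous_snd) continuous_const))

lemma isCompact_unitTriangle : IsCompact unitTriangle :=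
  (isCompact_Icc (a := ((0 : ℝ), (0 : ℝ))) (b := (1, 1))).of_isClosed_subset
    isClosed_unitTriangle fun z ⟨h₁, h₂, h₃⟩ => by
    simp only [mem_Icc, Prod.le_def]
    exact ⟨⟨h₁, h₂⟩, by linarith, by linarith⟩

lemma mk_mem_unitTriangle {x y : ℝ} :
    (x, y) ∈ unitTriangle ↔ y ∈ Icc 0 1 ∧ x ∈ Icc 0 (1 - y) := by
  simp only [unitTriangle, mem_Icc]
  constructor
  · rintro ⟨hx, hy, hxy⟩; exact ⟨⟨hy, by linarith⟩, hx, by linarith⟩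
  · rintro ⟨⟨hy, -⟩, hx, hxy⟩; exact ⟨hx, hy, by linarith⟩

lemma integral_indicator_unitTriangle_slice (F : ℝ × ℝ → ℝ) (y : ℝ) :
    ∫ x, unitTriangle.indicator F (x, y) =
      (Icc 0 1).indicator (fun y => ∫ x in (0:ℝ)..1 - y, F (x, y)) y := by
  by_cases hy : y ∈ Icc (0:ℝ) 1
  · have hslice : (fun x => unitTriangle.indicator F (x, y)) =
        (Icc 0 (1 - y)).indicator (fun x => F (x, y)) := by
      ext x; simp only [indicator, mk_mem_unitTriangle, hy, true_and]
    rw [indicator_of_mem hy, hslice, integral_indicator measurableSet_Icc,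
      intervalIntegral.integral_of_le (by linarith [hy.2]), integral_Icc_eq_integral_Ioc]
  · simp [mk_mem_unitTriangle, hy]

lemma setIntegral_unitTriangle (F : ℝ × ℝ → ℝ) (hF : IntegrableOn F unitTriangle) :
    ∫ z in unitTriangle, F z = ∫ y in (0:ℝ)..1, ∫ x in (0:ℝ)..1 - y, F (x, y) := by
  have hmeas := isClosed_unitTriangle.measurableSet
  rw [← integrable_indicator_iff hmeas, Measure.volume_eq_prod] at hF
  rw [← integral_indicator hmeas, Measure.volume_eq_prod, integral_prod_symm _ hF]
  simp_rw [integral_indicator_unitTriangle_slice]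
  rw [integral_indicator measurableSet_Icc, integral_Icc_eq_integral_Ioc,
    ← intervalIntegral.integral_of_le zero_le_one]

lemma preimage_swap_unitTriangle : Prod.swap ⁻¹' unitTriangle = unitTriangle := by
  ext ⟨x, y⟩
  simp only [unitTriangle, mem_preimage, Prod.swap_prod_mk]
  constructor <;> rintro ⟨h₁, h₂, h₃⟩ <;> exact ⟨h₂, h₁, by linarith⟩

lemma setIntegral_unitTriangle' (F : ℝ × ℝ → ℝ) (hF : IntegrableOn F unitTriangle) :
    ∫ z in unitTriangle, F z = ∫ x in (0:ℝ)..1, ∫ y in (0:ℝ)..1 - x, F (x, y) := by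
  have hswap : MeasurePreserving (Prod.swap : ℝ × ℝ → ℝ × ℝ) volume volume := by
    rw [Measure.volume_eq_prod]; exact Measure.measurePreserving_swap
  have hemb := (MeasurableEquiv.prodComm (α := ℝ) (β := ℝ)).measurableEmbedding
  have hF' : IntegrableOn (F ∘ Prod.swap) unitTriangle := by
    have := (hswap.integrableOn_comp_preimage hemb (f := F) (s := unitTriangle)).2 hF
    rwa [preimage_swap_unitTriangle] at this
  have hchange := hswap.setIntegral_preimage_emb hemb F unitTriangle
  rw [preimage_swap_unitTriangle] at hchange
  rw [← hchange]
  exact setIntegral_unitTriangle _ hF'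

lemma convex_Khat_setOf : Convex ℝ {x : E2 | 0 ≤ x 0 ∧ 0 ≤ x 1 ∧ x 0 + x 1 ≤ 1} := by
  intro x ⟨hx₀, hx₁, hx⟩ y ⟨hy₀, hy₁, hy⟩ s t hs ht hst
  refine ⟨?_, ?_, ?_⟩ <;> simp only [WithLp.ofLp_add, WithLp.ofLp_smul, Pi.add_apply,
    Pi.smul_apply, smul_eq_mul]
  · positivity
  · positivity
  · nlinarith

lemma Khat_eq_setOf : Khat = {x : E2 | 0 ≤ x 0 ∧ 0 ≤ x 1 ∧ x 0 + x 1 ≤ 1} := by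
  refine (convexHull_min ?_ convex_Khat_setOf).antisymm fun x ⟨hx₀, hx₁, hx⟩ => ?_
  · rintro _ (rfl | rfl | rfl) <;> simp
  have hw : ∑ i, ![1 - x 0 - x 1, x 0, x 1] i = 1 := by simp [Fin.sum_univ_three]; ring
  have hmem := (convex_convexHull ℝ ({pt 0 0, pt 1 0, pt 0 1} : Set E2)).sum_mem (t := Finset.univ)
    (w := ![1 - x 0 - x 1, x 0, x 1]) (z := ![pt 0 0, pt 1 0, pt 0 1])
    (fun i _ => by fin_cases i <;> simp <;> linarith) hw
    (fun i _ => subset_convexHull ℝ _ (by fin_cases i <;> simp))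
  convert hmem
  ext i; fin_cases i <;> simp [Fin.sum_univ_three]

lemma preimage_planeEquiv_Khat : planeEquiv ⁻¹' Khat = unitTriangle := by
  rw [Khat_eq_setOf]; rfl

lemma setIntegral_Khat (G : E2 → ℝ) :
    ∫ x in Khat, G x = ∫ z in unitTriangle, G (planeEquiv z) := by
  rw [← preimage_planeEquiv_Khat,
    measurePreserving_planeEquiv.setIntegral_preimage_emb
      planeEquiv.toHomeomorph.measurableEmbedding]

lemma continuous_fderiv_apply_coord {r : E2 → E2} (hr : ContDiff ℝ 1 r) (w : E2) (i : Fin 2) :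
    Continuous fun x => fderiv ℝ r x w i :=
  (EuclideanSpace.proj i).continuous.comp
    ((hr.continuous_fderiv one_ne_zero).clm_apply continuous_const)

lemma integral_fderiv_comp_coord {r : E2 → E2} (hr : ContDiff ℝ 1 r) (i : Fin 2) {γ : ℝ → E2}
    {v : E2} (hγ : ∀ t, HasDerivAt γ v t) (a b : ℝ) :
    ∫ t in a..b, fderiv ℝ r (γ t) v i = r (γ b) i - r (γ a) i := by
  have hγc : Continuous γ := continuous_iff_continuousAt.2 fun t => (hγ t).continuousAt
  refine intervalIntegral.integral_eq_sub_of_hasDerivAt (f := fun t => r (γ t) i) (fun t _ => ?_)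
    (((continuous_fderiv_apply_coord hr v i).comp hγc).intervalIntegrable _ _)
  exact (EuclideanSpace.proj i).hasFDerivAt.comp_hasDerivAt t
    ((hr.differentiable one_ne_zero _).hasFDerivAt.comp_hasDerivAt t (hγ t))

lemma integral_divg_Khat_eq {r : E2 → E2} (hr : ContDiff ℝ 1 r) :
    ∫ x in Khat, divg r x =
      (∫ y in (0:ℝ)..1, r (pt (1 - y) y) 0 - r (pt 0 y) 0) +
        ∫ x in (0:ℝ)..1, r (pt x (1 - x)) 1 - r (pt x 0) 1 := by
  have hint : ∀ w i, IntegrableOn (fun z => fderiv ℝ r (planeEquiv z) w i) unitTriangle :=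
    fun w i => ((continuous_fderiv_apply_coord hr w i).comp planeEquiv.continuous).continuousOn
      |>.integrableOn_compact isCompact_unitTriangle
  rw [setIntegral_Khat]
  simp only [divg]
  rw [integral_add (hint _ _) (hint _ _), setIntegral_unitTriangle _ (hint _ _),
    setIntegral_unitTriangle' _ (hint _ _)]
  simp only [planeEquiv_apply, integral_fderiv_comp_coord hr _ (hasDerivAt_pt_left · _),
    integral_fderiv_comp_coord hr _ (hasDerivAt_pt_right _ ·)]

lemma intervalIntegral_comp_one_sub (f : ℝ → ℝ) :
    ∫ x in (0:ℝ)..1, f (1 - x) = ∫ x in (0:ℝ)..1, f x := by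
  simp [intervalIntegral.integral_comp_sub_left f 1]

lemma flux_boundary_Khat {r : E2 → E2} (hr : Continuous r) :
    flux r (pt 0 0) (pt 1 0) + flux r (pt 1 0) (pt 0 1) + flux r (pt 0 1) (pt 0 0) =
      (∫ y in (0:ℝ)..1, r (pt (1 - y) y) 0 - r (pt 0 y) 0) +
        ∫ x in (0:ℝ)..1, r (pt x (1 - x)) 1 - r (pt x 0) 1 := by
  have hc : ∀ i {f g : ℝ → ℝ}, Continuous f → Continuous g →
      IntervalIntegrable (fun t => r (pt (f t) (g t)) i) volume 0 1 := fun i f g hf hg =>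
    ((EuclideanSpace.proj i).continuous.comp (hr.comp (planeEquiv.continuous.comp
      (hf.prodMk hg)))).intervalIntegrable _ _
  have hsub₀ : ∫ x in (0:ℝ)..1, r (pt 0 (1 - x)) 0 = ∫ y in (0:ℝ)..1, r (pt 0 y) 0 :=
    intervalIntegral_comp_one_sub (fun y => r (pt 0 y) 0)
  have hsub₁ : ∫ t in (0:ℝ)..1, r (pt (1 - t) t) 1 = ∫ x in (0:ℝ)..1, r (pt x (1 - x)) 1 := by
    simpa using intervalIntegral_comp_one_sub (fun x => r (pt x (1 - x)) 1)
  simp only [flux, dot2, rot, pt_add_smul_sub, pt_apply_zero, pt_apply_one, WithLp.ofLp_sub,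
    Pi.sub_apply]
  simp only [sub_zero, mul_one, zero_add, sub_self, mul_zero, add_zero, mul_neg,
    ← sub_eq_add_neg, zero_sub, intervalIntegral.integral_neg, neg_neg, neg_zero]
  rw [intervalIntegral.integral_add, intervalIntegral.integral_sub, intervalIntegral.integral_sub,
    hsub₀, hsub₁]
  · ring
  all_goals exact hc _ (by fun_prop) (by fun_prop)

theorem integral_divg_Khat {r : E2 → E2} (hr : ContDiff ℝ 1 r) :
    ∫ x in Khat, divg r x =
      flux r (pt 0 0) (pt 1 0) + flux r (pt 1 0) (pt 0 1) + flux r (pt 0 1) (pt 0 0) := by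
  rw [integral_divg_Khat_eq hr, flux_boundary_Khat hr.continuous]

def cross (u v : E2) : ℝ := u 0 * v 1 - u 1 * v 0

def ofColumns (u v : E2) : E2 →L[ℝ] E2 :=
  (EuclideanSpace.proj 0).smulRight u + (EuclideanSpace.proj 1).smulRight v

lemma ofColumns_apply (u v x : E2) (i : Fin 2) : ofColumns u v x i = x 0 * u i + x 1 * v i := by
  simp [ofColumns]

lemma ofColumns_pt (u v : E2) (a b : ℝ) : ofColumns u v (pt a b) = a • u + b • v := by
  ext i; simp [ofColumns_apply]

@[simp] lemma ofColumns_vex (u v : E2) : ofColumns u v vex = u := by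
  ext i; simp [ofColumns_apply, vex]

@[simp] lemma ofColumns_vey (u v : E2) : ofColumns u v vey = v := by
  ext i; simp [ofColumns_apply, vey]

lemma det_ofColumns (u v : E2) : LinearMap.det (ofColumns u v : E2 →ₗ[ℝ] E2) = cross u v := by
  rw [← LinearMap.det_toMatrix (EuclideanSpace.basisFun (Fin 2) ℝ).toBasis, Matrix.det_fin_two]
  simp [LinearMap.toMatrix_apply, ofColumns_apply, cross]
  ring

lemma clm_apply_coord (A : E2 →L[ℝ] E2) (w : E2) (i : Fin 2) :
    A w i = w 0 * A vex i + w 1 * A vey i := by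
  have hw : w = w 0 • vex + w 1 • vey := by ext j; fin_cases j <;> simp [vex, vey]
  conv_lhs => rw [hw]
  simp

/-- The contravariant Piola transform `z ↦ adj(M) q(x₀ + M z)` for `M = ofColumns u v`; the outer
`ofColumns` is the adjugate `adj(M) = cross u v • M⁻¹`. -/
def piola (x₀ u v : E2) (q : E2 → E2) (z : E2) : E2 :=
  ofColumns (pt (v 1) (-(u 1))) (pt (-(v 0)) (u 0)) (q (x₀ + ofColumns u v z))

lemma piola_eq_comp (x₀ u v : E2) (q : E2 → E2) :
    piola x₀ u v q =
      ⇑(ofColumns (pt (v 1) (-(u 1))) (pt (-(v 0)) (u 0))) ∘ q ∘ fun z => x₀ + ofColumns u v z :=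
  rfl

lemma contDiff_piola (x₀ u v : E2) {q : E2 → E2} (hq : ContDiff ℝ 1 q) :
    ContDiff ℝ 1 (piola x₀ u v q) :=
  (ContinuousLinearMap.contDiff _).comp
    (hq.comp (contDiff_const.add (ContinuousLinearMap.contDiff _)))

lemma divg_piola (x₀ u v : E2) {q : E2 → E2} (hq : ContDiff ℝ 1 q) (z : E2) :
    divg (piola x₀ u v q) z = cross u v * divg q (x₀ + ofColumns u v z) := by
  have hL : HasFDerivAt (fun z => x₀ + ofColumns u v z) (ofColumns u v) z :=
    (ofColumns u v).hasFDerivAt.const_add x₀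
  have hq' : HasFDerivAt q (fderiv ℝ q (x₀ + ofColumns u v z)) (x₀ + ofColumns u v z) :=
    (hq.differentiable one_ne_zero _).hasFDerivAt
  have hderiv := (ofColumns (pt (v 1) (-(u 1))) (pt (-(v 0)) (u 0))).hasFDerivAt.comp z
    (hq'.comp z hL)
  rw [divg, divg, piola_eq_comp, hderiv.fderiv]
  simp only [ContinuousLinearMap.comp_apply, ofColumns_vex, ofColumns_vey, ofColumns_apply,
    pt_apply_zero, pt_apply_one]
  rw [clm_apply_coord _ u, clm_apply_coord _ u, clm_apply_coord _ v, clm_apply_coord _ v, cross]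
  ring

lemma flux_piola (x₀ u v : E2) (q : E2 → E2) (c d : E2) :
    flux (piola x₀ u v q) c d = flux q (x₀ + ofColumns u v c) (x₀ + ofColumns u v d) := by
  unfold flux
  congr 1 with t
  rw [add_sub_add_left_eq_sub, ← map_sub, ← map_smul, add_assoc, ← map_add]
  simp only [piola, dot2, rot, ofColumns_apply, pt_apply_zero, pt_apply_one]
  ring

lemma cross_mul_integral_divg_comp (x₀ u v : E2) {q : E2 → E2} (hq : ContDiff ℝ 1 q) :
    cross u v * ∫ z in Khat, divg q (x₀ + ofColumns u v z) =
      flux q x₀ (x₀ + u) + flux q (x₀ + u) (x₀ + v) + flux q (x₀ + v) x₀ := by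
  rw [← integral_const_mul]
  simp_rw [← divg_piola x₀ u v hq]
  rw [integral_divg_Khat (contDiff_piola x₀ u v hq)]
  simp [flux_piola, ofColumns_pt]

lemma image_Khat (x₁ x₂ x₃ : E2) :
    (fun y => x₁ + ofColumns (x₂ - x₁) (x₃ - x₁) y) '' Khat = convexHull ℝ {x₁, x₂, x₃} := by
  let L : E2 →ᵃ[ℝ] E2 := AffineMap.const ℝ E2 x₁ +
    (ofColumns (x₂ - x₁) (x₃ - x₁) : E2 →ₗ[ℝ] E2).toAffineMap
  change L '' Khat = _
  rw [Khat, L.image_convexHull]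
  simp [L, image_insert_eq, ofColumns_pt]

lemma volume_convexHull_triple (x₁ x₂ x₃ : E2) :
    volume (convexHull ℝ {x₁, x₂, x₃}) =
      ENNReal.ofReal |cross (x₂ - x₁) (x₃ - x₁)| * volume Khat := by
  rw [← image_Khat, ← image_image (x₁ + ·) (ofColumns (x₂ - x₁) (x₃ - x₁)), image_add_left,
    measure_preimage_add, Measure.addHaar_image_continuousLinearMap, det_ofColumns]

lemma volume_convexHull_pos {x₁ x₂ x₃ : E2} (h : AffineIndependent ℝ ![x₁, x₂, x₃]) :
    0 < volume (convexHull ℝ {x₁, x₂, x₃}) := by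
  refine Measure.measure_pos_of_nonempty_interior _
    (interior_convexHull_nonempty_iff_affineSpan_eq_top.2 ?_)
  have := h.affineSpan_eq_top_iff_card_eq_finrank_add_one.2 (by simp)
  rwa [Matrix.range_cons, Matrix.range_cons_cons_empty, singleton_union] at this

lemma cross_ne_zero_of_affineIndependent {x₁ x₂ x₃ : E2} (h : AffineIndependent ℝ ![x₁, x₂, x₃]) :
    cross (x₂ - x₁) (x₃ - x₁) ≠ 0 := by
  intro h0
  have := volume_convexHull_pos h
  rw [volume_convexHull_triple, h0] at this
  simp at this

lemma measurableSet_Khat : MeasurableSet Khat :=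
  ((Set.toFinite _).isCompact_convexHull (𝕜 := ℝ)).isClosed.measurableSet

theorem cross_mul_integral_divg_convexHull (x₁ x₂ x₃ : E2) {q : E2 → E2} (hq : ContDiff ℝ 1 q) :
    cross (x₂ - x₁) (x₃ - x₁) * ∫ x in convexHull ℝ {x₁, x₂, x₃}, divg q x =
      |cross (x₂ - x₁) (x₃ - x₁)| * (flux q x₁ x₂ + flux q x₂ x₃ + flux q x₃ x₁) := by
  set M := ofColumns (x₂ - x₁) (x₃ - x₁)
  rcases eq_or_ne (cross (x₂ - x₁) (x₃ - x₁)) 0 with hD | hD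
  · simp [hD]
  have hinj : InjOn (fun y => x₁ + M y) Khat := fun y _ y' _ h =>
    (LinearMap.equivOfDetNeZero _ ((det_ofColumns _ _).trans_ne hD)).injective (add_left_cancel h)
  rw [← image_Khat, integral_image_eq_integral_abs_det_fderiv_smul volume measurableSet_Khat
    (fun x _ => (M.hasFDerivAt.const_add x₁).hasFDerivWithinAt) hinj]
  simp only [smul_eq_mul, ContinuousLinearMap.det, det_ofColumns, M]
  rw [integral_const_mul, mul_left_comm, cross_mul_integral_divg_comp _ _ _ hq]
  simp

lemma divg_smul_add_const (a : ℝ) (b x : E2) : divg (fun y => a • y + b) x = 2 * a := by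
  have h : HasFDerivAt (fun y : E2 => a • y + b) (a • ContinuousLinearMap.id ℝ E2) x :=
    ((hasFDerivAt_id x).const_smul a).add_const b
  rw [divg, h.fderiv]
  simp [vex, vey]
  ring

/-- The divergence of the Raviart–Thomas interpolant is the mean of the divergence:
if `p(x) = a x + b` has the same edge fluxes as `q` on the triangle `K`, then
`2a = (1/|K|) ∫_K div q dx`. -/
theorem stmt5 (x₁ x₂ x₃ : E2) (hK : AffineIndependent ℝ ![x₁, x₂, x₃])
    (K : Set E2) (hKdef : K = convexHull ℝ {x₁, x₂, x₃})
    (q : E2 → E2) (hq : ContDiff ℝ 1 q)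
    (a : ℝ) (b : E2) (p : E2 → E2) (hp : p = fun x => a • x + b)
    (h₁ : flux p x₂ x₃ = flux q x₂ x₃)
    (h₂ : flux p x₃ x₁ = flux q x₃ x₁)
    (h₃ : flux p x₁ x₂ = flux q x₁ x₂) :
    2 * a = (1 / (volume K).toReal) * ∫ x in K, divg q x := by
  subst hKdef hp
  have hpC : ContDiff ℝ 1 fun x : E2 => a • x + b := (contDiff_id.const_smul a).add contDiff_const
  have hdiv : ∫ x in convexHull ℝ {x₁, x₂, x₃}, divg q x =
      ∫ x in convexHull ℝ {x₁, x₂, x₃}, divg (fun x => a • x + b) x :=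
    mul_left_cancel₀ (cross_ne_zero_of_affineIndependent hK) (by
      rw [cross_mul_integral_divg_convexHull _ _ _ hq, cross_mul_integral_divg_convexHull _ _ _ hpC,
        h₁, h₂, h₃])
  have hvol : (volume (convexHull ℝ {x₁, x₂, x₃})).toReal ≠ 0 :=
    ENNReal.toReal_ne_zero.2 ⟨(volume_convexHull_pos hK).ne',
      ((Set.toFinite _).isCompact_convexHull (𝕜 := ℝ)).measure_lt_top.ne⟩
  rw [hdiv]
  simp_rw [divg_smul_add_const]
  rw [setIntegral_const, measureReal_def, smul_eq_mul]
  field_simp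
end
end

section
/- (Babuška–Aziz) There exists a constant C > 0 such that for every C¹ function v : ℝ² → ℝ with ∫₀¹ v(s, 0) ds = 0, one has ∫_{K̂} v² dx ≤ C² ∫_{K̂} |∇v|² dx, where K̂ is the reference triangle. -/
open MeasureTheory

noncomputable section

/-!
Work in the collapsed coordinates `(s, y) ↦ ((1 - y) s, y)`, which map the unit square onto `K̂`
with Jacobian `1 - y`. Since `v` has mean zero on the bottom edge,
`v(s, y) = ∫₀¹ (v(s, y) - v(σ, y)) dσ + ∫₀¹ (v(σ, y) - v(σ, 0)) dσ`.
The first term is a difference along the horizontal slice at height `y`, the second one along the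
segments from `(σ, 0)` to the top vertex `(0, 1)`; Cauchy–Schwarz bounds both by integrals of
`|∇v|²`. The vertical term is singular near the top vertex, but after multiplying by the Jacobian
the factor `1 - y ≤ 1 - t` (for `t ≤ y`) turns it into at most an integral over `K̂`. This gives
`(1 - y) v(s, y)² ≤ 2 (1 - y) ∫₀¹ |∇v|²(s', y) ds' + 4 ∫_{K̂} |∇v|²`, and integrating over the
square yields the theorem with `C² = 6`.
-/

open Set
open scoped Interval

theorem pt_self (p : E2) : pt (p 0) (p 1) = p := by
  ext i; fin_cases i <;> rfl

theorem pt_eq_smul_add (a b : ℝ) : pt a b = a • vex + b • vey := by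
  ext i; fin_cases i <;> simp [pt, vex, vey]

theorem pt_add_smul_pt (a b c d t : ℝ) : pt a b + t • pt c d = pt (a + t * c) (b + t * d) := by
  ext i; fin_cases i <;> simp [pt]

@[fun_prop]
theorem Continuous.pt {X : Type*} [TopologicalSpace X] {f g : X → ℝ} (hf : Continuous f)
    (hg : Continuous g) : Continuous fun x => _root_.pt (f x) (g x) := by
  simp only [pt_eq_smul_add]; fun_prop

theorem sq_intervalIntegral_le {f : ℝ → ℝ} (hf : Continuous f) {a b : ℝ} (hab : a ≤ b) :
    (∫ x in a..b, f x) ^ 2 ≤ (b - a) * ∫ x in a..b, f x ^ 2 := by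
  obtain ⟨I, hI⟩ : ∃ I, ∫ x in a..b, f x = I := ⟨_, rfl⟩
  obtain ⟨S, hS⟩ : ∃ S, ∫ x in a..b, f x ^ 2 = S := ⟨_, rfl⟩
  rw [hI, hS]
  -- expand `0 ≤ ∫ ((b - a) f - I)²`
  have hexpand : ∫ x in a..b, ((b - a) * f x - I) ^ 2 = (b - a) * ((b - a) * S - I ^ 2) := by
    have e : (fun x => ((b - a) * f x - I) ^ 2)
        = fun x => (b - a) ^ 2 * f x ^ 2 - 2 * (b - a) * I * f x + I ^ 2 := by
      ext x; ring
    rw [e, intervalIntegral.integral_add, intervalIntegral.integral_sub,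
      intervalIntegral.integral_const_mul, intervalIntegral.integral_const_mul,
      intervalIntegral.integral_const, hI, hS, smul_eq_mul]
    · ring
    all_goals apply Continuous.intervalIntegrable; fun_prop
  have hnonneg : 0 ≤ (b - a) * ((b - a) * S - I ^ 2) :=
    hexpand ▸ intervalIntegral.integral_nonneg hab fun x _ => sq_nonneg _
  rcases hab.eq_or_lt with rfl | hlt
  · simp [← hI]
  · linarith [(mul_nonneg_iff_of_pos_left (sub_pos.2 hlt)).1 hnonneg]

theorem abs_intervalIntegral_le_of_mem_Icc {f : ℝ → ℝ} (hf : Continuous f) {a b c d : ℝ}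
    (ha : a ∈ Icc c d) (hb : b ∈ Icc c d) : |∫ x in a..b, f x| ≤ ∫ x in c..d, |f x| := by
  have hsub : Ι a b ⊆ Ioc c d := Ioc_subset_Ioc (le_min ha.1 hb.1) (max_le ha.2 hb.2)
  calc |∫ x in a..b, f x|
    _ ≤ ∫ x in Ι a b, |f x| := by
      simpa only [Real.norm_eq_abs] using
        intervalIntegral.norm_integral_le_integral_norm_uIoc (f := f) (μ := volume)
    _ ≤ ∫ x in Ioc c d, |f x| :=
      setIntegral_mono_set (hf.abs.integrableOn_Ioc) (.of_forall fun x => abs_nonneg _)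
        hsub.eventuallyLE
    _ = ∫ x in c..d, |f x| := (intervalIntegral.integral_of_le (ha.1.trans ha.2)).symm

theorem sq_sub_le_of_hasDerivAt {f f' : ℝ → ℝ} (hf : ∀ t, HasDerivAt f (f' t) t)
    (hf' : Continuous f') {a b c d : ℝ} (ha : a ∈ Icc c d) (hb : b ∈ Icc c d) :
    (f b - f a) ^ 2 ≤ (d - c) * ∫ t in c..d, f' t ^ 2 := by
  have hftc : f b - f a = ∫ t in a..b, f' t :=
    (intervalIntegral.integral_eq_sub_of_hasDerivAt (fun t _ => hf t)
      (hf'.intervalIntegrable a b)).symm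
  calc (f b - f a) ^ 2 = |∫ t in a..b, f' t| ^ 2 := by rw [hftc, sq_abs]
    _ ≤ (∫ t in c..d, |f' t|) ^ 2 := by
      gcongr; exact abs_intervalIntegral_le_of_mem_Icc hf' ha hb
    _ ≤ (d - c) * ∫ t in c..d, |f' t| ^ 2 := sq_intervalIntegral_le hf'.abs (ha.1.trans ha.2)
    _ = (d - c) * ∫ t in c..d, f' t ^ 2 := by simp only [sq_abs]

theorem intervalIntegral_intervalIntegral_swap {F : ℝ → ℝ → ℝ}
    (hF : Continuous (Function.uncurry F)) {a b c d : ℝ} (hab : a ≤ b) (hcd : c ≤ d) :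
    ∫ x in a..b, ∫ y in c..d, F x y = ∫ y in c..d, ∫ x in a..b, F x y := by
  simp only [intervalIntegral.integral_of_le hab, intervalIntegral.integral_of_le hcd]
  refine integral_integral_swap ?_
  rw [Measure.prod_restrict]
  exact (hF.continuousOn.integrableOn_compact (isCompact_Icc.prod isCompact_Icc)).mono_set
    (prod_mono Ioc_subset_Icc_self Ioc_subset_Icc_self)

theorem mul_integral_le_integral_one_sub_mul {G : ℝ → ℝ} (hG : Continuous G) (hG0 : ∀ t, 0 ≤ G t)
    {y : ℝ} (hy0 : 0 ≤ y) (hy1 : y ≤ 1) :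
    (1 - y) * ∫ t in (0:ℝ)..y, G t ≤ ∫ t in (0:ℝ)..1, (1 - t) * G t := by
  rw [← intervalIntegral.integral_const_mul]
  calc ∫ t in (0:ℝ)..y, (1 - y) * G t
      ≤ ∫ t in (0:ℝ)..y, (1 - t) * G t := by
        refine intervalIntegral.integral_mono_on hy0
          (Continuous.intervalIntegrable (by fun_prop) _ _)
          (Continuous.intervalIntegrable (by fun_prop) _ _) fun t ht => ?_
        exact mul_le_mul_of_nonneg_right (by linarith [ht.2]) (hG0 t)
    _ ≤ ∫ t in (0:ℝ)..1, (1 - t) * G t := by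
        refine intervalIntegral.integral_mono_interval le_rfl hy0 hy1 ?_
          (Continuous.intervalIntegrable (by fun_prop) _ _)
        filter_upwards [ae_restrict_mem measurableSet_Ioc] with t ht
        exact mul_nonneg (by linarith [ht.2]) (hG0 t)

theorem ContDiff.sq_sub_comp_line_le {E : Type*} [NormedAddCommGroup E] [NormedSpace ℝ E]
    {v : E → ℝ} (hv : ContDiff ℝ 1 v) (x u : E) {a b c d : ℝ} (ha : a ∈ Icc c d)
    (hb : b ∈ Icc c d) :
    (v (x + b • u) - v (x + a • u)) ^ 2 ≤ (d - c) * ∫ t in c..d, fderiv ℝ v (x + t • u) u ^ 2 := by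
  refine sq_sub_le_of_hasDerivAt (f := fun t => v (x + t • u))
    (f' := fun t => fderiv ℝ v (x + t • u) u) (fun t => ?_) ?_ ha hb
  · have hline : HasDerivAt (fun s : ℝ => x + s • u) u t := by
      simpa using ((hasDerivAt_id t).smul_const u).const_add x
    exact (hv.differentiable one_ne_zero _).hasFDerivAt.comp_hasDerivAt t hline
  · exact ((hv.continuous_fderiv one_ne_zero).comp (by fun_prop)).clm_apply continuous_const

theorem fderiv_apply_pt (v : E2 → ℝ) (x : E2) (a b : ℝ) :
    fderiv ℝ v x (pt a b) = a * fderiv ℝ v x vex + b * fderiv ℝ v x vey := by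
  rw [pt_eq_smul_add, map_add, map_smul, map_smul, smul_eq_mul, smul_eq_mul]

theorem sq_fderiv_apply_pt_le (v : E2 → ℝ) (x : E2) (a b : ℝ) :
    fderiv ℝ v x (pt a b) ^ 2 ≤ (a ^ 2 + b ^ 2) * gradSq v x := by
  rw [fderiv_apply_pt, gradSq]
  nlinarith [sq_nonneg (a * fderiv ℝ v x vey - b * fderiv ℝ v x vex)]

theorem ContDiff.continuous_gradSq {v : E2 → ℝ} (hv : ContDiff ℝ 1 v) : Continuous (gradSq v) := by
  unfold gradSq; fun_prop

theorem Khat_eq : Khat = {p : E2 | p 1 ∈ Icc 0 1 ∧ p 0 ∈ Icc 0 (1 - p 1)} := by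
  apply le_antisymm
  · refine convexHull_min ?_ ?_
    · rintro p (rfl | rfl | rfl) <;> norm_num [pt]
    · rintro p ⟨⟨hp1, -⟩, hp0, hp⟩ q ⟨⟨hq1, -⟩, hq0, hq⟩ a b ha hb hab
      have e0 : (a • p + b • q) 0 = a * p 0 + b * q 0 := rfl
      have e1 : (a • p + b • q) 1 = a * p 1 + b * q 1 := rfl
      simp only [mem_ofPred_eq, mem_Icc, e0, e1]
      refine ⟨⟨?_, ?_⟩, ?_, ?_⟩ <;> nlinarith
  · rintro p ⟨⟨hp1, -⟩, hp0, hp⟩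
    have hcomb : p = ∑ i : Fin 3, ![1 - p 0 - p 1, p 0, p 1] i • ![pt 0 0, pt 1 0, pt 0 1] i := by
      ext i; fin_cases i <;> simp [Fin.sum_univ_three, pt]
    rw [hcomb]
    refine (convex_convexHull ℝ _).sum_mem (fun i _ => ?_) ?_ (fun i _ => subset_convexHull ℝ _ ?_)
    · fin_cases i <;>
        simp only [Fin.zero_eta, Fin.mk_one, Fin.reduceFinMk, Matrix.cons_val] <;> linarith
    · simp only [Fin.sum_univ_three, Matrix.cons_val]; ring
    · fin_cases i <;> simp

theorem setIntegral_Khat_s7 {f : E2 → ℝ} (hf : Continuous f) :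
    ∫ x in Khat, f x = ∫ y in (0:ℝ)..1, ∫ x in (0:ℝ)..(1 - y), f (pt x y) := by
  let e : E2 ≃ᵐ ℝ × ℝ := (MeasurableEquiv.toLp 2 (Fin 2 → ℝ)).symm.trans MeasurableEquiv.finTwoArrow
  have he : MeasurePreserving e volume volume :=
    (volume_preserving_finTwoArrow ℝ).comp
      (EuclideanSpace.volume_preserving_symm_measurableEquiv_toLp (Fin 2))
  let T : Set (ℝ × ℝ) := {q | q.2 ∈ Icc 0 1 ∧ q.1 ∈ Icc 0 (1 - q.2)}
  let F : ℝ × ℝ → ℝ := fun q => f (pt q.1 q.2)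
  have hT : MeasurableSet T := by
    simp only [T, mem_Icc, ofPred_and]
    refine ((measurableSet_le ?_ ?_).inter (measurableSet_le ?_ ?_)).inter
      ((measurableSet_le ?_ ?_).inter (measurableSet_le ?_ ?_)) <;> fun_prop
  have hTc : IsCompact T :=
    (isCompact_Icc (a := ((0:ℝ), (0:ℝ))) (b := (1, 1))).of_isClosed_subset
      (by simp only [T, mem_Icc, ofPred_and]; refine .inter (.inter ?_ ?_) (.inter ?_ ?_) <;>
        exact isClosed_le (by fun_prop) (by fun_prop))
      (fun q ⟨⟨hq2, _⟩, hq1, _⟩ => ⟨⟨hq1, hq2⟩, ⟨by linarith, by linarith⟩⟩)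
  have hslice : ∀ y, (fun x => (x, y)) ⁻¹' T = if y ∈ Icc 0 1 then Icc 0 (1 - y) else ∅ := by
    intro y
    by_cases hy : y ∈ Icc (0:ℝ) 1
    · ext x; simp [T, hy.1, hy.2]
    · ext x; simp only [mem_Icc] at hy; simp [T, hy]
  calc ∫ x in Khat, f x = ∫ q in T, F q := by
        have hK : Khat = e ⁻¹' T := Khat_eq
        rw [hK, ← he.setIntegral_preimage_emb e.measurableEmbedding F T]
        exact setIntegral_congr_fun (e.measurable hT) fun p _ => by simp [F, e, pt_self]
    _ = ∫ y, ∫ x, T.indicator F (x, y) := by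
        rw [← integral_indicator hT, Measure.volume_eq_prod]
        exact integral_prod_symm _ ((integrable_indicator_iff hT).2
          ((hf.comp (by fun_prop)).continuousOn.integrableOn_compact hTc))
    _ = ∫ y in Icc 0 1, ∫ x in (0:ℝ)..(1 - y), F (x, y) := by
        rw [← integral_indicator measurableSet_Icc]
        congr 1; ext y
        rw [← funext fun x => indicator_comp_right (s := T) (g := F) (fun x => (x, y)) (x := x)]
        by_cases hy : y ∈ Icc (0:ℝ) 1
        · rw [hslice, if_pos hy, indicator_of_mem hy, integral_indicator measurableSet_Icc,
            integral_Icc_eq_integral_Ioc, intervalIntegral.integral_of_le (by linarith [hy.2])]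
          rfl
        · simp [hslice, hy]
    _ = ∫ y in (0:ℝ)..1, ∫ x in (0:ℝ)..(1 - y), f (pt x y) := by
        rw [integral_Icc_eq_integral_Ioc, intervalIntegral.integral_of_le zero_le_one]

-- Duffy's collapsed coordinates: the unit square onto `Khat`, its top edge onto the vertex (0, 1).
def duffy (s y : ℝ) : E2 := pt ((1 - y) * s) y

@[fun_prop]
theorem Continuous.duffy {X : Type*} [TopologicalSpace X] {f g : X → ℝ} (hf : Continuous f)
    (hg : Continuous g) : Continuous fun x => _root_.duffy (f x) (g x) := by
  unfold _root_.duffy; fun_prop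

theorem intervalIntegral_slice_eq_duffy (g : E2 → ℝ) (y : ℝ) :
    ∫ x in (0:ℝ)..(1 - y), g (pt x y) = (1 - y) * ∫ s in (0:ℝ)..1, g (duffy s y) := by
  simpa [duffy] using
    (intervalIntegral.smul_integral_comp_mul_left (fun x => g (pt x y)) (1 - y)
      (a := 0) (b := 1)).symm

theorem setIntegral_Khat_eq_duffy {f : E2 → ℝ} (hf : Continuous f) :
    ∫ x in Khat, f x = ∫ y in (0:ℝ)..1, (1 - y) * ∫ s in (0:ℝ)..1, f (duffy s y) := by
  simp only [setIntegral_Khat_s7 hf, intervalIntegral_slice_eq_duffy]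

def sliceMeanGradSq (v : E2 → ℝ) (y : ℝ) : ℝ := ∫ s in (0:ℝ)..1, gradSq v (duffy s y)

section Estimates

variable {v : E2 → ℝ}

theorem sliceMeanGradSq_nonneg (v : E2 → ℝ) (y : ℝ) : 0 ≤ sliceMeanGradSq v y :=
  intervalIntegral.integral_nonneg zero_le_one fun _ _ => by unfold gradSq; positivity

theorem ContDiff.continuous_sliceMeanGradSq (hv : ContDiff ℝ 1 v) :
    Continuous (sliceMeanGradSq v) :=
  intervalIntegral.continuous_parametric_intervalIntegral_of_continuous'
    (f := fun y s => gradSq v (duffy s y)) (hv.continuous_gradSq.comp (by fun_prop)) 0 1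

theorem ContDiff.sq_sub_duffy_horizontal_le (hv : ContDiff ℝ 1 v) {s σ : ℝ} (y : ℝ)
    (hs : s ∈ Icc (0:ℝ) 1) (hσ : σ ∈ Icc (0:ℝ) 1) :
    (v (duffy s y) - v (duffy σ y)) ^ 2 ≤ (1 - y) ^ 2 * sliceMeanGradSq v y := by
  have hline : ∀ t : ℝ, pt 0 y + t • pt (1 - y) 0 = duffy t y := fun t => by
    rw [pt_add_smul_pt, duffy]; congr 1 <;> ring
  have h := hv.sq_sub_comp_line_le (pt 0 y) (pt (1 - y) 0) hσ hs
  simp only [hline, sub_zero, one_mul] at h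
  refine h.trans ?_
  rw [sliceMeanGradSq, ← intervalIntegral.integral_const_mul]
  refine intervalIntegral.integral_mono_on zero_le_one ?_ ?_ fun t _ => ?_
  · apply Continuous.intervalIntegrable; fun_prop
  · apply Continuous.intervalIntegrable; have := hv.continuous_gradSq; fun_prop
  · simpa using sq_fderiv_apply_pt_le v (duffy t y) (1 - y) 0

theorem ContDiff.sq_sub_duffy_vertical_le (hv : ContDiff ℝ 1 v) {σ y : ℝ}
    (hσ : σ ∈ Icc (0:ℝ) 1) (hy : y ∈ Icc (0:ℝ) 1) :
    (v (duffy σ y) - v (duffy σ 0)) ^ 2 ≤ 2 * ∫ t in (0:ℝ)..y, gradSq v (duffy σ t) := by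
  have hline : ∀ t : ℝ, pt σ 0 + t • pt (-σ) 1 = duffy σ t := fun t => by
    rw [pt_add_smul_pt, duffy]; congr 1 <;> ring
  have h := hv.sq_sub_comp_line_le (pt σ 0) (pt (-σ) 1) (c := 0) (d := y)
    (left_mem_Icc.2 hy.1) (right_mem_Icc.2 hy.1)
  simp only [hline, sub_zero] at h
  refine h.trans ?_
  calc y * ∫ t in (0:ℝ)..y, fderiv ℝ v (duffy σ t) (pt (-σ) 1) ^ 2
      ≤ 1 * ∫ t in (0:ℝ)..y, fderiv ℝ v (duffy σ t) (pt (-σ) 1) ^ 2 := by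
        gcongr
        · exact intervalIntegral.integral_nonneg hy.1 fun _ _ => sq_nonneg _
        · exact hy.2
    _ ≤ ∫ t in (0:ℝ)..y, 2 * gradSq v (duffy σ t) := by
        rw [one_mul]
        refine intervalIntegral.integral_mono_on hy.1 ?_ ?_ fun t _ => ?_
        · apply Continuous.intervalIntegrable; fun_prop
        · apply Continuous.intervalIntegrable; have := hv.continuous_gradSq; fun_prop
        · refine (sq_fderiv_apply_pt_le v _ _ _).trans ?_
          gcongr
          · unfold gradSq; positivity
          · nlinarith [hσ.1, hσ.2]
    _ = 2 * ∫ t in (0:ℝ)..y, gradSq v (duffy σ t) := intervalIntegral.integral_const_mul _ _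

theorem apply_duffy_eq_of_integral_eq_zero (hv : Continuous v)
    (hmean : ∫ s in (0:ℝ)..1, v (pt s 0) = 0) (s y : ℝ) :
    v (duffy s y) = (∫ σ in (0:ℝ)..1, (v (duffy s y) - v (duffy σ y)))
      + ∫ σ in (0:ℝ)..1, (v (duffy σ y) - v (duffy σ 0)) := by
  have hbottom : ∀ σ, duffy σ 0 = pt σ 0 := fun σ => by simp [duffy]
  rw [← intervalIntegral.integral_add (Continuous.intervalIntegrable (by fun_prop) _ _)
    (Continuous.intervalIntegrable (by fun_prop) _ _)]
  simp only [sub_add_sub_cancel, hbottom]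
  rw [intervalIntegral.integral_sub intervalIntegrable_const
    (Continuous.intervalIntegrable (by fun_prop) _ _), hmean]
  simp

theorem ContDiff.sq_integral_sub_duffy_horizontal_le (hv : ContDiff ℝ 1 v) {s : ℝ}
    (hs : s ∈ Icc (0:ℝ) 1) (y : ℝ) :
    (∫ σ in (0:ℝ)..1, (v (duffy s y) - v (duffy σ y))) ^ 2 ≤ (1 - y) ^ 2 * sliceMeanGradSq v y := by
  calc (∫ σ in (0:ℝ)..1, (v (duffy s y) - v (duffy σ y))) ^ 2
      ≤ (1 - 0) * ∫ σ in (0:ℝ)..1, (v (duffy s y) - v (duffy σ y)) ^ 2 :=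
        sq_intervalIntegral_le (by fun_prop) zero_le_one
    _ ≤ (1 - 0) * ∫ σ in (0:ℝ)..1, (1 - y) ^ 2 * sliceMeanGradSq v y := by
        gcongr
        refine intervalIntegral.integral_mono_on zero_le_one
          (Continuous.intervalIntegrable (by fun_prop) _ _) intervalIntegrable_const fun σ hσ => ?_
        exact hv.sq_sub_duffy_horizontal_le y hs hσ
    _ = (1 - y) ^ 2 * sliceMeanGradSq v y := by simp

theorem ContDiff.sq_integral_sub_duffy_vertical_le (hv : ContDiff ℝ 1 v) {y : ℝ}
    (hy : y ∈ Icc (0:ℝ) 1) :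
    (∫ σ in (0:ℝ)..1, (v (duffy σ y) - v (duffy σ 0))) ^ 2
      ≤ 2 * ∫ t in (0:ℝ)..y, sliceMeanGradSq v t := by
  have hg : Continuous fun q : ℝ × ℝ => gradSq v (duffy q.1 q.2) :=
    hv.continuous_gradSq.comp (by fun_prop)
  calc (∫ σ in (0:ℝ)..1, (v (duffy σ y) - v (duffy σ 0))) ^ 2
      ≤ (1 - 0) * ∫ σ in (0:ℝ)..1, (v (duffy σ y) - v (duffy σ 0)) ^ 2 :=
        sq_intervalIntegral_le (by fun_prop) zero_le_one
    _ ≤ ∫ σ in (0:ℝ)..1, 2 * ∫ t in (0:ℝ)..y, gradSq v (duffy σ t) := by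
        rw [sub_zero, one_mul]
        refine intervalIntegral.integral_mono_on zero_le_one
          (Continuous.intervalIntegrable (by fun_prop) _ _) ?_ fun σ hσ => ?_
        · apply Continuous.intervalIntegrable; fun_prop
        · exact hv.sq_sub_duffy_vertical_le hσ hy
    _ = 2 * ∫ t in (0:ℝ)..y, sliceMeanGradSq v t := by
        rw [intervalIntegral.integral_const_mul,
          intervalIntegral_intervalIntegral_swap (F := fun σ t => gradSq v (duffy σ t)) hg
            zero_le_one hy.1]
        rfl

theorem ContDiff.mul_sq_apply_duffy_le (hv : ContDiff ℝ 1 v)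
    (hmean : ∫ s in (0:ℝ)..1, v (pt s 0) = 0) {s y : ℝ} (hs : s ∈ Icc (0:ℝ) 1)
    (hy : y ∈ Icc (0:ℝ) 1) :
    (1 - y) * v (duffy s y) ^ 2
      ≤ 2 * ((1 - y) * sliceMeanGradSq v y)
        + 4 * ∫ t in (0:ℝ)..1, (1 - t) * sliceMeanGradSq v t := by
  obtain ⟨hy0, hy1⟩ := hy
  have hX := hv.sq_integral_sub_duffy_horizontal_le hs y
  have hY := hv.sq_integral_sub_duffy_vertical_le ⟨hy0, hy1⟩
  have hdecay := mul_integral_le_integral_one_sub_mul hv.continuous_sliceMeanGradSq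
    (sliceMeanGradSq_nonneg v) hy0 hy1
  have hGy := sliceMeanGradSq_nonneg v y
  rw [apply_duffy_eq_of_integral_eq_zero hv.continuous hmean s y]
  set X := ∫ σ in (0:ℝ)..1, (v (duffy s y) - v (duffy σ y))
  set Y := ∫ σ in (0:ℝ)..1, (v (duffy σ y) - v (duffy σ 0))
  have h1y : 0 ≤ 1 - y := by linarith
  have hXw : (1 - y) * X ^ 2 ≤ (1 - y) * sliceMeanGradSq v y :=
    calc (1 - y) * X ^ 2 ≤ (1 - y) * ((1 - y) ^ 2 * sliceMeanGradSq v y) :=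
          mul_le_mul_of_nonneg_left hX h1y
      _ ≤ (1 - y) * sliceMeanGradSq v y :=
          mul_le_mul_of_nonneg_left
            (mul_le_of_le_one_left hGy (pow_le_one₀ h1y (by linarith))) h1y
  have hYw : (1 - y) * Y ^ 2 ≤ 2 * ∫ t in (0:ℝ)..1, (1 - t) * sliceMeanGradSq v t :=
    calc (1 - y) * Y ^ 2 ≤ (1 - y) * (2 * ∫ t in (0:ℝ)..y, sliceMeanGradSq v t) :=
          mul_le_mul_of_nonneg_left hY h1y
      _ ≤ 2 * ∫ t in (0:ℝ)..1, (1 - t) * sliceMeanGradSq v t := by linarith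
  nlinarith [mul_nonneg h1y (sq_nonneg (X - Y))]

theorem ContDiff.mul_integral_sq_duffy_le (hv : ContDiff ℝ 1 v)
    (hmean : ∫ s in (0:ℝ)..1, v (pt s 0) = 0) {y : ℝ} (hy : y ∈ Icc (0:ℝ) 1) :
    (1 - y) * ∫ s in (0:ℝ)..1, v (duffy s y) ^ 2
      ≤ 2 * ((1 - y) * sliceMeanGradSq v y)
        + 4 * ∫ t in (0:ℝ)..1, (1 - t) * sliceMeanGradSq v t := by
  rw [← intervalIntegral.integral_const_mul]
  calc ∫ s in (0:ℝ)..1, (1 - y) * v (duffy s y) ^ 2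
      ≤ ∫ s in (0:ℝ)..1, (2 * ((1 - y) * sliceMeanGradSq v y)
          + 4 * ∫ t in (0:ℝ)..1, (1 - t) * sliceMeanGradSq v t) :=
        intervalIntegral.integral_mono_on zero_le_one
          (Continuous.intervalIntegrable (by fun_prop) _ _) intervalIntegrable_const
          fun s hs => hv.mul_sq_apply_duffy_le hmean hs hy
    _ = _ := by simp

end Estimates

/-- Babuška–Aziz: there is a constant `C` such that every C¹ function on the
reference triangle whose mean over the bottom edge vanishes satisfies
`∫_{K̂} v² ≤ C² ∫_{K̂} |∇v|²`. -/
theorem stmt7 :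
    ∃ C > (0:ℝ), ∀ v : E2 → ℝ, ContDiff ℝ 1 v →
      (∫ s in (0:ℝ)..1, v (pt s 0)) = 0 →
      (∫ x in Khat, (v x) ^ 2) ≤ C ^ 2 * ∫ x in Khat, gradSq v x := by
  refine ⟨3, by norm_num, fun v hv hmean => ?_⟩
  have hG := hv.continuous_sliceMeanGradSq
  rw [setIntegral_Khat_eq_duffy (f := fun x => v x ^ 2) (hv.continuous.pow 2),
    setIntegral_Khat_eq_duffy hv.continuous_gradSq]
  change _ ≤ _ * ∫ y in (0:ℝ)..1, (1 - y) * sliceMeanGradSq v y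
  set D := ∫ y in (0:ℝ)..1, (1 - y) * sliceMeanGradSq v y
  have hD : 0 ≤ D := intervalIntegral.integral_nonneg zero_le_one fun y hy =>
    mul_nonneg (by linarith [hy.2]) (sliceMeanGradSq_nonneg v y)
  calc ∫ y in (0:ℝ)..1, (1 - y) * ∫ s in (0:ℝ)..1, v (duffy s y) ^ 2
      ≤ ∫ y in (0:ℝ)..1, (2 * ((1 - y) * sliceMeanGradSq v y) + 4 * D) :=
        intervalIntegral.integral_mono_on zero_le_one
          (Continuous.intervalIntegrable (by fun_prop) _ _)
          (Continuous.intervalIntegrable (by fun_prop) _ _)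
          fun y hy => hv.mul_integral_sq_duffy_le hmean hy
    _ = 6 * D := by
        rw [intervalIntegral.integral_add (Continuous.intervalIntegrable (by fun_prop) _ _)
          intervalIntegrable_const, intervalIntegral.integral_const_mul,
          intervalIntegral.integral_const, smul_eq_mul]
        ring
    _ ≤ 3 ^ 2 * D := by nlinarith

end
end

section
/- Let α, β > 0, let s, t ∈ ℝ with s² + t² = 1 and t > 0, let A be the 2×2 matrix with rows (1, s) and (0, t), let K_{αβ} be the triangle with vertices (0,0), (α,0), (0,β), and let K := A(K_{αβ}) be its image under x ↦ A x. Let p : ℝ² → ℝ² be a C¹ vector field and define its Piola pull-back q(x) := A⁻¹ p(A x). Then ∫_K |p(y)|² dy ≤ (1 + |s|) t ∫_{K_{αβ}} |q(x)|² dx and ∫_K |∇p(y)|_F² dy ≥ ((1 − |s|)²/t) ∫_{K_{αβ}} |∇q(x)|_F² dx. -/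
open MeasureTheory

noncomputable section

set_option maxHeartbeats 1000000

namespace Stmt17Aux

lemma abs_lt_one (s t : ℝ) (ht : 0 < t) (hst : s^2 + t^2 = 1) : |s| < 1 := by
  nlinarith [sq_abs s, abs_nonneg s]

lemma stepA (s t x y : ℝ) (ht : 0 < t) (hst : s^2 + t^2 = 1) :
    (t*x - s*y)^2 + y^2 ≤ (1 + |s|) * (x^2 + y^2) := by
  have h1 : |s| < 1 := abs_lt_one s t ht hst
  rcases abs_cases s with ⟨h2, h3⟩ | ⟨h2, h3⟩ <;> rw [h2] at h1 ⊢
  · nlinarith [mul_nonneg h3 (sq_nonneg (t*x + (1-s)*y)), sq_nonneg (t*x + (1-s)*y)]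
  · nlinarith [mul_nonneg (neg_nonneg.2 h3.le) (sq_nonneg (t*x - (1+s)*y)), sq_nonneg (t*x - (1+s)*y)]

lemma stepB (s t x y : ℝ) (ht : 0 < t) (hst : s^2 + t^2 = 1) :
    x^2 + (s*x + t*y)^2 ≤ (1 + |s|) * (x^2 + y^2) := by
  have h1 : |s| < 1 := abs_lt_one s t ht hst
  rcases abs_cases s with ⟨h2, h3⟩ | ⟨h2, h3⟩ <;> rw [h2] at h1 ⊢
  · nlinarith [mul_nonneg h3 (sq_nonneg ((1-s)*x - t*y)), sq_nonneg ((1-s)*x - t*y)]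
  · nlinarith [mul_nonneg (neg_nonneg.2 h3.le) (sq_nonneg ((1+s)*x + t*y)), sq_nonneg ((1+s)*x + t*y)]

lemma key1 (s t v0 v1 : ℝ) (hst : s^2 + t^2 = 1) :
    (1*v0 + s*v1)^2 + (0*v0 + t*v1)^2 ≤ (1 + |s|) * (v0^2 + v1^2) := by
  nlinarith [mul_nonneg (abs_nonneg s) (sq_nonneg (v0+v1)),
    mul_nonneg (abs_nonneg s) (sq_nonneg (v0-v1)), le_abs_self s, neg_abs_le s]

lemma key4 (s t a b c d : ℝ) (ht : 0 < t) (hst : s^2 + t^2 = 1) :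
    (1 - |s|)^2 * ((t*a - s*c)^2 + (t*(s*a+t*b) - s*(s*c+t*d))^2 + c^2 + (s*c+t*d)^2)
      ≤ t^4 * (a^2 + b^2 + c^2 + d^2) := by
  have hσ0 : 0 ≤ |s| := abs_nonneg s
  have hσ1 : |s| < 1 := abs_lt_one s t ht hst
  have ht2 : t^2 = 1 - |s|^2 := by rw [sq_abs]; linarith
  have sA1 := stepA s t a c ht hst
  have sA2 := stepA s t (s*a+t*b) (s*c+t*d) ht hst
  have sB1 := stepB s t a b ht hst
  have sB2 := stepB s t c d ht hst
  have h2 : (s*a+t*b)^2 + (s*c+t*d)^2 ≤ (1+|s|)*(a^2+b^2+c^2+d^2) - (a^2+c^2) := by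
    nlinarith [sB1, sB2]
  have h2' := mul_le_mul_of_nonneg_left h2 (show (0:ℝ) ≤ 1+|s| by linarith)
  have h3 : (t*a - s*c)^2 + (t*(s*a+t*b) - s*(s*c+t*d))^2 + c^2 + (s*c+t*d)^2
      ≤ (1+|s|)^2 * (a^2+b^2+c^2+d^2) := by nlinarith [sA1, sA2, h2']
  have h4 := mul_le_mul_of_nonneg_left h3 (sq_nonneg (1-|s|))
  calc (1 - |s|)^2 * ((t*a - s*c)^2 + (t*(s*a+t*b) - s*(s*c+t*d))^2 + c^2 + (s*c+t*d)^2)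
      ≤ (1-|s|)^2 * ((1+|s|)^2 * (a^2+b^2+c^2+d^2)) := h4
    _ = (1 - |s|^2)^2 * (a^2+b^2+c^2+d^2) := by ring
    _ = t^4 * (a^2 + b^2 + c^2 + d^2) := by rw [show (t:ℝ)^4 = (t^2)^2 by ring, ht2]

lemma key2 (s t a b c d : ℝ) (ht : 0 < t) (hst : s^2 + t^2 = 1) :
    (1 - |s|)^2 / t *
      ((1*a + (-(s/t))*c)^2 + (1*(s*a+t*b) + (-(s/t))*(s*c+t*d))^2
        + (0*a + (1/t)*c)^2 + (0*(s*a+t*b) + (1/t)*(s*c+t*d))^2)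
      ≤ t * (a^2 + b^2 + c^2 + d^2) := by
  have htne : t ≠ 0 := ht.ne'
  have h4 := key4 s t a b c d ht hst
  have hexp : ((1*a + (-(s/t))*c)^2 + (1*(s*a+t*b) + (-(s/t))*(s*c+t*d))^2
        + (0*a + (1/t)*c)^2 + (0*(s*a+t*b) + (1/t)*(s*c+t*d))^2) * t^2
      = (t*a - s*c)^2 + (t*(s*a+t*b) - s*(s*c+t*d))^2 + c^2 + (s*c+t*d)^2 := by
    field_simp; ring
  rw [div_mul_eq_mul_div, div_le_iff₀ ht]
  have h2 : (0:ℝ) < t^2 := by positivity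
  rw [← mul_le_mul_iff_of_pos_right h2, mul_assoc, hexp]
  calc (1 - |s|)^2 * ((t*a - s*c)^2 + (t*(s*a+t*b) - s*(s*c+t*d))^2 + c^2 + (s*c+t*d)^2)
      ≤ t^4 * (a^2+b^2+c^2+d^2) := h4
    _ = t * (a^2+b^2+c^2+d^2) * t * t^2 := by ring

def mLinAux (A : Matrix (Fin 2) (Fin 2) ℝ) : E2 →ₗ[ℝ] E2 where
  toFun := matVec A
  map_add' x y := by
    ext i; fin_cases i <;> simp [matVec, pt, PiLp.add_apply] <;> ring
  map_smul' c x := by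
    ext i; fin_cases i <;> simp [matVec, pt, PiLp.smul_apply, smul_eq_mul] <;> ring

def mLin (A : Matrix (Fin 2) (Fin 2) ℝ) : E2 →L[ℝ] E2 :=
  LinearMap.toContinuousLinearMap (mLinAux A)

lemma mLin_apply (A : Matrix (Fin 2) (Fin 2) ℝ) (x : E2) : mLin A x = matVec A x := rfl

lemma toMatrix_mLinAux (A : Matrix (Fin 2) (Fin 2) ℝ) :
    LinearMap.toMatrix (PiLp.basisFun 2 ℝ (Fin 2)) (PiLp.basisFun 2 ℝ (Fin 2)) (mLinAux A) = A := by
  ext i j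
  rw [LinearMap.toMatrix_apply, PiLp.basisFun_repr, PiLp.basisFun_apply]
  fin_cases i <;> fin_cases j <;>
    simp [mLinAux, matVec, pt, PiLp.ofLp_single]

lemma mLin_det (A : Matrix (Fin 2) (Fin 2) ℝ) : (mLin A).det = A.det := by
  have h : (mLin A).det = LinearMap.det (mLinAux A) := rfl
  rw [h, ← LinearMap.det_toMatrix (PiLp.basisFun 2 ℝ (Fin 2)) (mLinAux A), toMatrix_mLinAux]

lemma pt_zero (a b : ℝ) : (pt a b) 0 = a := rfl
lemma pt_one (a b : ℝ) : (pt a b) 1 = b := rfl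

lemma inv_shear (s t : ℝ) (ht : t ≠ 0) :
    (!![1, s; 0, t])⁻¹ = !![1, -(s/t); 0, 1/t] := by
  apply Matrix.inv_eq_right_inv
  ext i j
  fin_cases i <;> fin_cases j <;>
    simp [Matrix.mul_apply, Fin.sum_univ_two] <;> field_simp <;> ring

lemma matVec_inv_cancel (s t : ℝ) (ht : t ≠ 0) (w : E2) :
    matVec !![1, s; 0, t] (matVec !![1, -(s/t); 0, 1/t] w) = w := by
  ext i
  fin_cases i <;>
    · show (pt _ _) _ = _
      simp [matVec, pt_zero, pt_one]
      field_simp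
      try ring

lemma pt_comb (a b : ℝ) : pt a b = a • vex + b • vey := by
  ext i
  fin_cases i <;>
    simp [pt, vex, vey, PiLp.add_apply, PiLp.smul_apply, smul_eq_mul]

lemma matVec_shear_vex (s t : ℝ) : matVec !![1, s; 0, t] vex = vex := by
  ext i; fin_cases i <;> simp [matVec, pt, vex]

lemma matVec_shear_vey (s t : ℝ) : matVec !![1, s; 0, t] vey = pt s t := by
  ext i; fin_cases i <;> simp [matVec, pt, vey]

lemma matVec_apply_zero (A : Matrix (Fin 2) (Fin 2) ℝ) (x : E2) :
    matVec A x 0 = A 0 0 * x 0 + A 0 1 * x 1 := rfl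
lemma matVec_apply_one (A : Matrix (Fin 2) (Fin 2) ℝ) (x : E2) :
    matVec A x 1 = A 1 0 * x 0 + A 1 1 * x 1 := rfl

lemma injective_matVec_shear (s t : ℝ) (ht : t ≠ 0) :
    Function.Injective (fun x => matVec !![1, s; 0, t] x) := by
  intro x y h
  have h0 := congrArg (fun v : E2 => v 0) h
  have h1 := congrArg (fun v : E2 => v 1) h
  simp only [matVec_apply_zero, matVec_apply_one] at h0 h1
  simp [Matrix.cons_val_zero, Matrix.cons_val_one, Matrix.head_cons] at h0 h1
  have hx1 : x 1 = y 1 := by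
    rcases h1 with h1 | h1
    · exact h1
    · exact absurd h1 ht
  rw [hx1] at h0
  ext i
  fin_cases i
  · show x 0 = y 0; linarith
  · exact hx1

lemma continuous_coord (i : Fin 2) : Continuous fun x : E2 => x i :=
  (EuclideanSpace.proj (𝕜 := ℝ) i).continuous

lemma continuous_frobSq {f : E2 → E2} (hf : ContDiff ℝ 1 f) : Continuous (frobSq f) := by
  have h : Continuous (fderiv ℝ f) := hf.continuous_fderiv one_ne_zero
  have hv : ∀ (v : E2) (i : Fin 2), Continuous fun x => fderiv ℝ f x v i := by
    intro v i
    have h1 : Continuous fun x => fderiv ℝ f x v :=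
      ((ContinuousLinearMap.apply ℝ E2 v).continuous).comp h
    exact (continuous_coord i).comp h1
  exact (((((hv vex 0).pow 2).add ((hv vey 0).pow 2)).add ((hv vex 1).pow 2)).add
    ((hv vey 1).pow 2))

end Stmt17Aux

open Stmt17Aux

/-- Bounds for the Piola pull-back `q(x) = A⁻¹ p(A x)` under the shear
`A = [[1, s], [0, t]]` mapping `K_{αβ}` onto `K`:
`∫_K |p|² ≤ (1 + |s|) t ∫_{K_{αβ}} |q|²` and
`∫_K |∇p|_F² ≥ ((1 − |s|)²/t) ∫_{K_{αβ}} |∇q|_F²`. -/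
theorem stmt17 (α β s t : ℝ) (hα : 0 < α) (hβ : 0 < β)
    (hst : s ^ 2 + t ^ 2 = 1) (ht : 0 < t)
    (A : Matrix (Fin 2) (Fin 2) ℝ) (hA : A = !![1, s; 0, t])
    (K : Set E2) (hK : K = (fun x => matVec A x) '' Kab α β)
    (p : E2 → E2) (hp : ContDiff ℝ 1 p)
    (q : E2 → E2) (hq : q = fun x => matVec A⁻¹ (p (matVec A x))) :
    (∫ y in K, dot2 (p y) (p y)) ≤ (1 + |s|) * t * ∫ x in Kab α β, dot2 (q x) (q x) ∧
    (∫ y in K, frobSq p y) ≥ (1 - |s|) ^ 2 / t * ∫ x in Kab α β, frobSq q x := by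
  subst hA hK
  set B : Matrix (Fin 2) (Fin 2) ℝ := !![1, -(s/t); 0, 1/t] with hB
  have hAinv : (!![1, s; 0, t])⁻¹ = B := inv_shear s t ht.ne'
  have hq' : q = fun x => matVec B (p (matVec !![1, s; 0, t] x)) := by rw [hq, hAinv]
  clear hq
  -- basic set facts
  have hKc : IsCompact (Kab α β) := by
    exact (Set.toFinite _).isCompact_convexHull ℝ
  have hKm : MeasurableSet (Kab α β) := hKc.measurableSet
  -- change of variables
  have hCoV : ∀ g : E2 → ℝ,
      (∫ y in (fun x => matVec !![1, s; 0, t] x) '' Kab α β, g y)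
        = ∫ x in Kab α β, |(mLin !![1, s; 0, t]).det| • g (matVec !![1, s; 0, t] x) := by
    intro g
    exact integral_image_eq_integral_abs_det_fderiv_smul volume hKm
      (fun x _ => (mLin !![1, s; 0, t]).hasFDerivAt.hasFDerivWithinAt)
      (injective_matVec_shear s t ht.ne').injOn g
  have hdet : |(mLin !![1, s; 0, t]).det| = t := by
    rw [mLin_det, Matrix.det_fin_two_of, show (1:ℝ)*t - s*0 = t by ring]
    exact abs_of_pos ht
  -- continuity facts
  have hmc : Continuous fun x : E2 => matVec !![1, s; 0, t] x := (mLin !![1, s; 0, t]).continuous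
  have hqc : Continuous q := by
    rw [hq']
    exact (mLin B).continuous.comp (hp.continuous.comp hmc)
  have hq1 : ContDiff ℝ 1 q := by
    rw [hq']
    exact (mLin B).contDiff.comp (hp.comp (mLin !![1, s; 0, t]).contDiff)
  have hdotq : Continuous fun x => dot2 (q x) (q x) := by
    unfold dot2
    exact (((continuous_coord 0).comp hqc).mul ((continuous_coord 0).comp hqc)).add
      (((continuous_coord 1).comp hqc).mul ((continuous_coord 1).comp hqc))
  have hdotp : Continuous fun x => dot2 (p (matVec !![1, s; 0, t] x)) (p (matVec !![1, s; 0, t] x)) := by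
    have hpc : Continuous fun x => p (matVec !![1, s; 0, t] x) := hp.continuous.comp hmc
    unfold dot2
    exact (((continuous_coord 0).comp hpc).mul ((continuous_coord 0).comp hpc)).add
      (((continuous_coord 1).comp hpc).mul ((continuous_coord 1).comp hpc))
  -- p (A x) = A (q x)
  have hpA : ∀ x, p (matVec !![1, s; 0, t] x) = matVec !![1, s; 0, t] (q x) := by
    intro x
    rw [hq']
    exact (matVec_inv_cancel s t ht.ne' _).symm
  constructor
  · -- first inequality
    rw [hCoV (fun y => dot2 (p y) (p y))]
    simp only [hdet, smul_eq_mul]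
    have hpt : ∀ x ∈ Kab α β,
        t * dot2 (p (matVec !![1, s; 0, t] x)) (p (matVec !![1, s; 0, t] x))
          ≤ (1 + |s|) * t * dot2 (q x) (q x) := by
      intro x _
      rw [hpA x]
      have hk := mul_le_mul_of_nonneg_left (key1 s t (q x 0) (q x 1) hst) ht.le
      simp only [dot2, matVec_apply_zero, matVec_apply_one]
      simp only [Matrix.cons_val', Matrix.cons_val_zero, Matrix.cons_val_one, Matrix.head_cons,
        Matrix.empty_val', Matrix.cons_val_fin_one, Matrix.head_fin_const, Matrix.of_apply]
      nlinarith [hk]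
    have hInt1 : IntegrableOn
        (fun x => t * dot2 (p (matVec !![1, s; 0, t] x)) (p (matVec !![1, s; 0, t] x)))
        (Kab α β) := ((continuous_const.mul hdotp)).continuousOn.integrableOn_compact hKc
    have hInt2 : IntegrableOn (fun x => (1 + |s|) * t * dot2 (q x) (q x)) (Kab α β) :=
      ((continuous_const.mul hdotq)).continuousOn.integrableOn_compact hKc
    calc ∫ x in Kab α β, t * dot2 (p (matVec !![1, s; 0, t] x)) (p (matVec !![1, s; 0, t] x))
        ≤ ∫ x in Kab α β, (1 + |s|) * t * dot2 (q x) (q x) :=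
          setIntegral_mono_on hInt1 hInt2 hKm hpt
      _ = (1 + |s|) * t * ∫ x in Kab α β, dot2 (q x) (q x) := integral_const_mul _ _
  · -- second inequality
    rw [ge_iff_le, hCoV (frobSq p)]
    simp only [hdet, smul_eq_mul]
    -- derivative of q
    have hDq : ∀ x, fderiv ℝ q x
        = ((mLin B).comp ((fderiv ℝ p (matVec !![1, s; 0, t] x)).comp (mLin !![1, s; 0, t]))) := by
      intro x
      rw [hq']
      have h1 : HasFDerivAt (fun y : E2 => matVec !![1, s; 0, t] y) (mLin !![1, s; 0, t]) x :=
        (mLin !![1, s; 0, t]).hasFDerivAt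
      have h2 : HasFDerivAt p (fderiv ℝ p (matVec !![1, s; 0, t] x)) (matVec !![1, s; 0, t] x) :=
        (hp.differentiable one_ne_zero _).hasFDerivAt
      have h3 : HasFDerivAt (fun v : E2 => matVec B v) (mLin B) (p (matVec !![1, s; 0, t] x)) :=
        (mLin B).hasFDerivAt
      exact (h3.comp x (h2.comp x h1)).fderiv
    have hpt : ∀ x ∈ Kab α β,
        (1 - |s|) ^ 2 / t * frobSq q x ≤ t * frobSq p (matVec !![1, s; 0, t] x) := by
      intro x _
      set D := fderiv ℝ p (matVec !![1, s; 0, t] x) with hD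
      set a := D vex 0
      set b := D vey 0
      set c := D vex 1
      set d := D vey 1
      have hfp : frobSq p (matVec !![1, s; 0, t] x) = a^2 + b^2 + c^2 + d^2 := rfl
      have hDvey : D (pt s t) = s • D vex + t • D vey := by
        rw [pt_comb s t, map_add, D.map_smul, D.map_smul]
      have hfq : frobSq q x
          = (1*a + (-(s/t))*c)^2 + (1*(s*a+t*b) + (-(s/t))*(s*c+t*d))^2
            + (0*a + (1/t)*c)^2 + (0*(s*a+t*b) + (1/t)*(s*c+t*d))^2 := by
        unfold frobSq
        rw [hDq x]
        simp only [ContinuousLinearMap.coe_comp', Function.comp_apply, mLin_apply,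
          matVec_shear_vex, matVec_shear_vey, ← hD, hDvey]
        simp only [matVec_apply_zero, matVec_apply_one, hB]
        simp only [Matrix.cons_val', Matrix.cons_val_zero, Matrix.cons_val_one, Matrix.head_cons,
          Matrix.empty_val', Matrix.cons_val_fin_one, Matrix.head_fin_const, Matrix.of_apply]
        simp only [PiLp.add_apply, PiLp.smul_apply, smul_eq_mul]
        try ring
      rw [hfp, hfq]
      exact key2 s t a b c d ht hst
    have hcq : Continuous (frobSq q) := continuous_frobSq hq1
    have hcp : Continuous fun x => frobSq p (matVec !![1, s; 0, t] x) :=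
      (continuous_frobSq hp).comp hmc
    have hInt1 : IntegrableOn (fun x => (1 - |s|) ^ 2 / t * frobSq q x) (Kab α β) :=
      ((continuous_const.mul hcq)).continuousOn.integrableOn_compact hKc
    have hInt2 : IntegrableOn (fun x => t * frobSq p (matVec !![1, s; 0, t] x)) (Kab α β) :=
      ((continuous_const.mul hcp)).continuousOn.integrableOn_compact hKc
    calc (1 - |s|) ^ 2 / t * ∫ x in Kab α β, frobSq q x
        = ∫ x in Kab α β, (1 - |s|) ^ 2 / t * frobSq q x := (integral_const_mul _ _).symm
      _ ≤ ∫ x in Kab α β, t * frobSq p (matVec !![1, s; 0, t] x) :=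
          setIntegral_mono_on hInt1 hInt2 hKm hpt


end
end
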